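/- arXiv:1804.05341 — 14 statements merged into one kernel-verified Lean document; each statement's English description precedes it below -/
import Mathlib

section
/- Let R be a commutative ring, M an R-module, A a matrix over R, and r ≥ 1. If A is partition regular over M for r colours, then A is partition regular for r colours over some finitely generated submodule of M. -/
open BigOperators

/-- A matrix `A` over `S` is partition regular over the `S`-module `M` for `r` colours if
every colouring of `M` with `r` colours admits a nonzero monochromatic solution of `A m = 0`. -/
def IsPR {S : Type*} [CommRing S] {k l : ℕ} (A : Matrix (Fin k) (Fin l) S)
    (M : Type*) [AddCommGroup M] [Module S M] (r : ℕ) : Prop :=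
  ∀ χ : M → Fin r, ∃ m : Fin l → M, m ≠ 0 ∧
    (∀ i, ∑ j, A i j • m j = 0) ∧ ∀ j j', χ (m j) = χ (m j')

/-- Partition regularity for every (positive) finite number of colours. -/
def IsPRAll {S : Type*} [CommRing S] {k l : ℕ} (A : Matrix (Fin k) (Fin l) S)
    (M : Type*) [AddCommGroup M] [Module S M] : Prop :=
  ∀ r : ℕ, 1 ≤ r → IsPR A M r

/-- An ultrafilter on any type picks out a value of a map into a finite type. -/
lemma ultrafilter_exists_const {α β : Type*} [Finite β] (U : Ultrafilter α) (f : α → β) :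
    ∃ b : β, {a | f a = b} ∈ U := by
  classical
  by_contra hc
  push_neg at hc
  have h1 : ∀ b : β, {a | f a = b}ᶜ ∈ U := fun b => (Ultrafilter.compl_mem_iff_notMem).2 (hc b)
  have h2 : (⋂ b : β, {a | f a = b}ᶜ) ∈ U := (Filter.iInter_mem).2 h1
  have h3 : (⋂ b : β, {a : α | f a = b}ᶜ) = ∅ := by
    ext a
    simp
  rw [h3] at h2
  exact Filter.empty_notMem (U : Filter α) h2

attribute [local instance] Classical.propDecidable

theorem pr_over_fg_submodule {R : Type*} [CommRing R] {k l : ℕ}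
    (A : Matrix (Fin k) (Fin l) R) (M : Type*) [AddCommGroup M] [Module R M]
    (r : ℕ) (hr : 1 ≤ r) (h : IsPR A M r) :
    ∃ N : Submodule R M, N.FG ∧ IsPR A N r := by
  by_contra hc
  push_neg at hc
  -- the directed set of finitely generated submodules
  let T := {N : Submodule R M // N.FG}
  letI : SemilatticeSup T := @Subtype.semilatticeSup _ _ _ (fun x y hx hy => hx.sup hy)
  haveI : Nonempty T := ⟨⟨⊥, Submodule.fg_bot⟩⟩
  -- for each FG submodule pick a bad colouring
  have hbad : ∀ N : T, ∃ χ : N.1 → Fin r, ∀ m : Fin l → N.1, m ≠ 0 →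
      (∀ i, ∑ j, A i j • m j = 0) → ∃ j j', χ (m j) ≠ χ (m j') := by
    intro N
    have := hc N.1 N.2
    unfold IsPR at this
    push_neg at this
    obtain ⟨χ, hχ⟩ := this
    refine ⟨χ, fun m hm hsum => ?_⟩
    have := hχ m hm hsum
    exact this
  choose χbad hχbad using hbad
  -- extend each bad colouring to all of M
  have hzero : 0 < r := hr
  let c : T → M → Fin r := fun N x => if hx : x ∈ N.1 then χbad N ⟨x, hx⟩ else ⟨0, hzero⟩
  -- take an ultrafilter extending the atTop filter on T
  haveI : (Filter.atTop : Filter T).NeBot := Filter.atTop_neBot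
  let U : Ultrafilter T := Ultrafilter.of Filter.atTop
  have hU : ↑U ≤ (Filter.atTop : Filter T) := Ultrafilter.of_le _
  -- define the limit colouring
  have hch : ∀ x : M, ∃ v : Fin r, {N : T | c N x = v} ∈ U := fun x =>
    ultrafilter_exists_const U (fun N => c N x)
  choose χ hχ using hch
  -- apply partition regularity of M to the limit colouring
  obtain ⟨m, hm0, hmeq, hmono⟩ := h χ
  -- the span of the solution entries
  have hfg : (Submodule.span R (Set.range m)).FG :=
    Submodule.fg_span (Set.finite_range m)
  let N₀ : T := ⟨Submodule.span R (Set.range m), hfg⟩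
  -- sets in the ultrafilter
  have hS : ∀ j : Fin l, {N : T | c N (m j) = χ (m j)} ∈ U := fun j => hχ (m j)
  have hT0 : {N : T | N₀ ≤ N} ∈ U := hU (Filter.mem_atTop N₀)
  have hall : ({N : T | N₀ ≤ N} ∩ ⋂ j : Fin l, {N : T | c N (m j) = χ (m j)}) ∈ U :=
    Filter.inter_mem hT0 ((Filter.iInter_mem).2 hS)
  obtain ⟨N, hN₀, hNj⟩ := U.nonempty_of_mem hall
  simp only [Set.mem_iInter, Set.mem_setOf_eq] at hNj
  -- the solution lives in N
  have hmem : ∀ j, m j ∈ N.1 := fun j =>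
    hN₀ (Submodule.subset_span (Set.mem_range_self j))
  let m' : Fin l → N.1 := fun j => ⟨m j, hmem j⟩
  have hm'0 : m' ≠ 0 := by
    intro hcontra
    apply hm0
    funext j
    have : m' j = 0 := congrFun hcontra j
    exact Subtype.ext_iff.1 this
  have hm'eq : ∀ i, ∑ j, A i j • m' j = 0 := by
    intro i
    apply Subtype.ext
    push_cast
    exact hmeq i
  obtain ⟨j, j', hjj'⟩ := hχbad N m' hm'0 hm'eq
  apply hjj'
  have e1 : ∀ j, χbad N (m' j) = χ (m j) := by
    intro j
    have := hNj j
    rw [← this]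
    show χbad N (m' j) = c N (m j)
    simp only [c]
    rw [dif_pos (hmem j)]
  rw [e1 j, e1 j', hmono j j']
end

section
/- Let R be a commutative ring, M an R-module, S a multiplicative subset of R containing no zero divisors on M, A a matrix over R, and r ≥ 1. Then A is partition regular over M for r colours if and only if A is partition regular over the localisation S⁻¹M for r colours. -/
open BigOperators

section Aux

variable {R : Type*} [CommRing R] {M : Type*} [AddCommGroup M] [Module R M]
  {S : Submonoid R}

lemma mk_inj_aux (hS : ∀ s ∈ S, ∀ m : M, s • m = 0 → m = 0)
    {a b : M} (h : LocalizedModule.mk a (1 : S) = LocalizedModule.mk b 1) : a = b := by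
  rw [LocalizedModule.mk_eq] at h
  obtain ⟨u, hu⟩ := h
  simp only [one_smul] at hu
  have : (u : R) • (a - b) = 0 := by
    rw [smul_sub, sub_eq_zero]
    simpa [Submonoid.smul_def] using hu
  have := hS u u.2 _ this
  exact sub_eq_zero.mp this

lemma smul_inj_aux (hS : ∀ s ∈ S, ∀ m : M, s • m = 0 → m = 0)
    (t : S) (x : LocalizedModule S M) (h : (t : R) • x = 0) : x = 0 := by
  induction x using LocalizedModule.induction_on with
  | _ a s =>
    rw [LocalizedModule.smul'_mk] at h
    rw [← LocalizedModule.zero_mk (s := s)] at h ⊢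
    rw [LocalizedModule.mk_eq] at h
    obtain ⟨u, hu⟩ := h
    simp only [smul_zero] at hu
    have : ((u * s * t : S) : R) • a = 0 := by
      push_cast
      rw [mul_smul, mul_smul]
      simpa [Submonoid.smul_def] using hu
    rw [hS _ (u * s * t).2 a this]

/-- Existence of a monochromatic-in-the-limit colour along an ultrafilter. -/
lemma exists_color {α : Type*} {r : ℕ} (U : Ultrafilter α) (f : α → Fin r) :
    ∃ c, {t | f t = c} ∈ U := by
  by_contra hc
  push_neg at hc
  have h1 : ∀ c : Fin r, {t | f t = c}ᶜ ∈ U := fun c =>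
    Ultrafilter.compl_mem_iff_notMem.mpr (hc c)
  have h2 : (⋂ c : Fin r, {t | f t = c}ᶜ) ∈ (U : Filter α) := Filter.iInter_mem.mpr h1
  have h3 : (⋂ c : Fin r, ({t | f t = c}ᶜ : Set α)) = ∅ := by
    ext t
    simp
  rw [h3] at h2
  exact U.neBot.ne (Filter.empty_mem_iff_bot.mp h2)

end Aux

theorem pr_localizedModule_iff {R : Type*} [CommRing R] {k l : ℕ}
    (A : Matrix (Fin k) (Fin l) R) (M : Type*) [AddCommGroup M] [Module R M]
    (S : Submonoid R) (hS : ∀ s ∈ S, ∀ m : M, s • m = 0 → m = 0)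
    (r : ℕ) (hr : 1 ≤ r) :
    IsPR A M r ↔ IsPR A (LocalizedModule S M) r := by
  have hinj : ∀ {a b : M}, LocalizedModule.mk a (1 : S) = LocalizedModule.mk b 1 → a = b :=
    fun h => mk_inj_aux hS h
  constructor
  · -- forward: pull back the colouring along mkLinearMap
    intro h χ
    obtain ⟨m, hm0, hsol, hmono⟩ := h (fun x => χ (LocalizedModule.mkLinearMap S M x))
    refine ⟨fun j => LocalizedModule.mkLinearMap S M (m j), ?_, ?_, fun j j' => hmono j j'⟩
    · intro hzero
      apply hm0
      funext j
      have := congrFun hzero j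
      simp only [Pi.zero_apply] at this ⊢
      have h0 : LocalizedModule.mkLinearMap S M (m j) = LocalizedModule.mkLinearMap S M 0 := by
        simpa using this
      exact hinj h0
    · intro i
      have : LocalizedModule.mkLinearMap S M (∑ j, A i j • m j)
          = LocalizedModule.mkLinearMap S M 0 := by rw [hsol i]
      simpa [map_sum, map_smul] using this
  · -- backward: clear denominators along an ultrafilter
    intro h χ
    classical
    -- the filter of "multiples" sets on S
    set D : S → Set S := fun s => {t | ∃ u : S, t = u * s} with hD
    have hDmem : ∀ s, s ∈ D s := fun s => ⟨1, (one_mul s).symm⟩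
    have hdir : Directed (· ≥ ·) (fun s => (Filter.principal (D s))) := by
      intro s s'
      refine ⟨s * s', ?_, ?_⟩
      · exact Filter.principal_mono.mpr (by rintro t ⟨u, rfl⟩; exact ⟨u * s', by rw [mul_comm s s', ← mul_assoc]⟩)
      · exact Filter.principal_mono.mpr (by rintro t ⟨u, rfl⟩; exact ⟨u * s, (mul_assoc u s s').symm⟩)
    haveI : Nonempty S := ⟨1⟩
    have hFne : (⨅ s, Filter.principal (D s)).NeBot := by
      apply Filter.iInf_neBot_of_directed hdir
      intro s
      exact Filter.principal_neBot_iff.mpr ⟨s, hDmem s⟩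
    set F := ⨅ s, Filter.principal (D s) with hF
    let U : Ultrafilter S := @Ultrafilter.of S F hFne
    have hUF : (U : Filter S) ≤ F := Ultrafilter.of_le F
    have hDU : ∀ s, D s ∈ U := by
      intro s
      exact hUF (Filter.mem_iInf_of_mem s (Filter.mem_principal_self _))
    -- clearing denominators
    set g : LocalizedModule S M → S → M := fun x t =>
      if h : ∃ a : M, (t : R) • x = LocalizedModule.mk a (1 : S) then h.choose else 0 with hg
    have hH : ∀ x : LocalizedModule S M,
        {t : S | ∃ a : M, (t : R) • x = LocalizedModule.mk a (1 : S)} ∈ U := by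
      intro x
      induction x using LocalizedModule.induction_on with
      | _ b t₀ =>
        refine Filter.mem_of_superset (hDU t₀) ?_
        rintro t ⟨u, rfl⟩
        refine ⟨(u : R) • b, ?_⟩
        rw [LocalizedModule.smul'_mk, ← LocalizedModule.mk_cancel (s := t₀) ((u:R) • b)]
        congr 1
        rw [Submonoid.smul_def, smul_smul, Submonoid.coe_mul, mul_comm]
    -- the colouring of the localized module
    have hcol : ∀ x : LocalizedModule S M, ∃ c, {t | χ (g x t) = c} ∈ U := fun x =>
      exists_color U (fun t => χ (g x t))
    set χ' : LocalizedModule S M → Fin r := fun x => (hcol x).choose with hχ'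
    have hχ'spec : ∀ x, {t | χ (g x t) = χ' x} ∈ U := fun x => (hcol x).choose_spec
    obtain ⟨m, hm0, hsol, hmono⟩ := h χ'
    -- pick a common denominator witnessing the colours
    have hall : (⋂ j : Fin l, ({t : S | ∃ a : M, (t : R) • m j = LocalizedModule.mk a (1 : S)}
        ∩ {t | χ (g (m j) t) = χ' (m j)})) ∈ (U : Filter S) :=
      Filter.iInter_mem.mpr fun j => Filter.inter_mem (hH (m j)) (hχ'spec (m j))
    obtain ⟨t, ht⟩ := Filter.nonempty_of_mem hall
    simp only [Set.mem_iInter, Set.mem_inter_iff, Set.mem_setOf_eq] at ht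
    set n : Fin l → M := fun j => g (m j) t with hn
    have hmk : ∀ j, (t : R) • m j = LocalizedModule.mk (n j) (1 : S) := by
      intro j
      have hex := (ht j).1
      have : g (m j) t = hex.choose := dif_pos hex
      rw [hn]
      simp only [this]
      exact hex.choose_spec
    refine ⟨n, ?_, ?_, ?_⟩
    · -- nonzero
      intro hzero
      apply hm0
      funext j
      have : n j = 0 := congrFun hzero j
      have h0 : (t : R) • m j = 0 := by
        rw [hmk j, this, LocalizedModule.zero_mk]
      exact smul_inj_aux hS t (m j) h0
    · -- solution
      intro i
      apply hinj
      have : LocalizedModule.mkLinearMap S M (∑ j, A i j • n j)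
          = (t : R) • ∑ j, A i j • m j := by
        rw [map_sum, Finset.smul_sum]
        refine Finset.sum_congr rfl fun j _ => ?_
        rw [map_smul, smul_comm]
        have : LocalizedModule.mkLinearMap S M (n j) = LocalizedModule.mk (n j) 1 := rfl
        rw [this, ← hmk j]
      have h2 : LocalizedModule.mk (∑ j, A i j • n j) (1 : S) = LocalizedModule.mk 0 1 := by
        have hz : ((t : R) • ∑ j, A i j • m j) = 0 := by rw [hsol i, smul_zero]
        calc LocalizedModule.mk (∑ j, A i j • n j) (1 : S)
            = LocalizedModule.mkLinearMap S M (∑ j, A i j • n j) := rfl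
          _ = (t : R) • ∑ j, A i j • m j := this
          _ = 0 := hz
          _ = LocalizedModule.mk 0 1 := (LocalizedModule.zero_mk 1).symm
      exact h2
    · -- monochromatic
      intro j j'
      have h1 : χ (n j) = χ' (m j) := (ht j).2
      have h2 : χ (n j') = χ' (m j') := (ht j').2
      rw [h1, h2, hmono j j']
end

section
/- Let R be an integral domain with fraction field K, A a matrix over R, and r ≥ 1. Then A is partition regular over R for r colours if and only if A is partition regular over K for r colours. -/
open BigOperators

theorem pr_fractionField_iff {R : Type*} [CommRing R] [IsDomain R] {k l : ℕ}
    (A : Matrix (Fin k) (Fin l) R) (K : Type*) [Field K] [Algebra R K]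
    [IsFractionRing R K] (r : ℕ) (hr : 1 ≤ r) :
    IsPR A R r ↔ IsPR A K r := by
  classical
  have hinj : Function.Injective (algebraMap R K) := IsFractionRing.injective R K
  constructor
  · intro h χ
    obtain ⟨m, hm0, hms, hmc⟩ := h (fun x => χ (algebraMap R K x))
    refine ⟨fun j => algebraMap R K (m j), ?_, ?_, fun j j' => hmc j j'⟩
    · intro h0
      apply hm0
      funext j
      have := congrFun h0 j
      exact hinj (by simpa using this)
    · intro i
      have := congrArg (algebraMap R K) (hms i)
      simpa [map_sum, Algebra.smul_def, map_mul] using this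
  · intro h χ
    by_contra hcon
    push_neg at hcon
    -- hcon : ∀ m, m ≠ 0 → (∀ i, ∑ j, A i j • m j = 0) → ∃ j j', χ (m j) ≠ χ (m j')
    -- common denominators for finite subsets of K
    have hden : ∀ F : Finset K, ∃ b : nonZeroDivisors R, ∀ a ∈ F,
        IsLocalization.IsInteger R ((b : R) • a) :=
      fun F => IsLocalization.exist_integer_multiples_of_finset (nonZeroDivisors R) F
    choose d hd using hden
    have hg : ∀ (F : Finset K) (x : K), ∃ a : R, x ∈ F →
        algebraMap R K a = (d F : R) • x := by
      intro F x
      by_cases hx : x ∈ F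
      · obtain ⟨a, ha⟩ := hd F x hx
        exact ⟨a, fun _ => ha⟩
      · exact ⟨0, fun hx' => absurd hx' hx⟩
    choose g hgspec using hg
    set χ' : Finset K → K → Fin r := fun F x => χ (g F x) with hχ'def
    -- each χ' F admits no nonzero monochromatic solution with entries in F
    have hbad : ∀ (F : Finset K) (m : Fin l → K), m ≠ 0 → (∀ j, m j ∈ F) →
        (∀ i, ∑ j, A i j • m j = 0) → ∃ j j', χ' F (m j) ≠ χ' F (m j') := by
      intro F m hm0 hmF hms
      set a : Fin l → R := fun j => g F (m j) with hadef
      have ha : ∀ j, algebraMap R K (a j) = (d F : R) • m j :=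
        fun j => hgspec F (m j) (hmF j)
      have hd0 : algebraMap R K (d F : R) ≠ 0 :=
        (map_ne_zero_iff _ hinj).mpr (nonZeroDivisors.coe_ne_zero _)
      have ha0 : a ≠ 0 := by
        intro h0
        apply hm0
        funext j
        have h1 : (d F : R) • m j = 0 := by
          rw [← ha j, congrFun h0 j]; simp
        rw [Algebra.smul_def] at h1
        rcases mul_eq_zero.mp h1 with h2 | h2
        · exact absurd h2 hd0
        · exact h2
      have has : ∀ i, ∑ j, A i j • a j = 0 := by
        intro i
        apply hinj
        rw [map_sum, map_zero]
        have step : ∀ j, algebraMap R K (A i j • a j) = (d F : R) • (A i j • m j) := by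
          intro j
          rw [smul_eq_mul, map_mul, ha j, Algebra.smul_def, Algebra.smul_def,
            Algebra.smul_def]
          ring
        rw [Finset.sum_congr rfl fun j _ => step j, ← Finset.smul_sum, hms i, smul_zero]
      obtain ⟨j, j', hjj⟩ := hcon a ha0 has
      exact ⟨j, j', hjj⟩
    -- take an ultrafilter extending the `atTop` filter on finite subsets of K
    haveI : Nonempty (Finset K) := ⟨∅⟩
    set U : Ultrafilter (Finset K) := Ultrafilter.of Filter.atTop with hUdef
    have hU : ∀ s ∈ (Filter.atTop : Filter (Finset K)), s ∈ U :=
      fun s hs => Ultrafilter.of_le _ hs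
    -- limit colouring
    have hlim : ∀ x : K, ∃ v : Fin r, {F | χ' F x = v} ∈ U := by
      intro x
      have huniv : (⋃ v ∈ (Set.univ : Set (Fin r)), {F : Finset K | χ' F x = v}) ∈ U := by
        have heq : (⋃ v ∈ (Set.univ : Set (Fin r)), {F : Finset K | χ' F x = v})
            = Set.univ := by
          ext F; simp
        rw [heq]
        exact Filter.univ_mem
      obtain ⟨v, _, hv⟩ := (Ultrafilter.finite_biUnion_mem_iff Set.finite_univ).mp huniv
      exact ⟨v, hv⟩
    choose χinf hχinf using hlim
    obtain ⟨m, hm0, hms, hmc⟩ := h χinf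
    have hmem : {F : Finset K | ∀ j, m j ∈ F} ∈ U := by
      apply hU
      refine Filter.mem_of_superset (Filter.mem_atTop (Finset.image m Finset.univ)) ?_
      intro F hF j
      exact hF (Finset.mem_image.mpr ⟨j, Finset.mem_univ _, rfl⟩)
    have hagree : {F : Finset K | ∀ j, χ' F (m j) = χinf (m j)} ∈ U := by
      have heq : {F : Finset K | ∀ j, χ' F (m j) = χinf (m j)}
          = ⋂ j, {F : Finset K | χ' F (m j) = χinf (m j)} := by
        ext F; simp [Set.mem_iInter]
      rw [heq]
      exact Filter.iInter_mem.mpr fun j => hχinf (m j)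
    obtain ⟨F, hF1, hF2⟩ := Ultrafilter.nonempty_of_mem (Filter.inter_mem hmem hagree)
    obtain ⟨j, j', hjj⟩ := hbad F m hm0 hF1 hms
    exact hjj (by rw [hF2 j, hF2 j', hmc j j'])
end

section
/- Let R be a commutative ring, M an R-module, N a submodule, A a matrix over R, and r, s ≥ 1. If A is partition regular over M for r+s colours, then either A is partition regular over N for r colours, or A is partition regular over M/N for s colours. -/
open BigOperators

theorem pr_submodule_or_quotient {R : Type*} [CommRing R] {k l : ℕ}
    (A : Matrix (Fin k) (Fin l) R) (M : Type*) [AddCommGroup M] [Module R M]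
    (N : Submodule R M) (r s : ℕ) (hr : 1 ≤ r) (hs : 1 ≤ s)
    (h : IsPR A M (r + s)) :
    IsPR A N r ∨ IsPR A (M ⧸ N) s := by
  classical
  by_contra hc
  push_neg at hc
  obtain ⟨h1, h2⟩ := hc
  rw [IsPR] at h1 h2
  push_neg at h1 h2
  obtain ⟨χ₁, hχ₁⟩ := h1
  obtain ⟨χ₂, hχ₂⟩ := h2
  set χ : M → Fin (r + s) := fun m =>
    if hm : m ∈ N then Fin.castAdd s (χ₁ ⟨m, hm⟩)
    else Fin.natAdd r (χ₂ (Submodule.Quotient.mk m)) with hχ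
  obtain ⟨m, hm0, hsum, hcol⟩ := h χ
  obtain ⟨j₀, hj₀⟩ := Function.ne_iff.mp hm0
  by_cases hN : m j₀ ∈ N
  · have hall : ∀ j, m j ∈ N := by
      intro j
      by_contra hj
      have hc := hcol j j₀
      simp only [hχ, dif_neg hj, dif_pos hN] at hc
      have := congrArg Fin.val hc
      simp only [Fin.coe_natAdd, Fin.coe_castAdd] at this
      have h1 := (χ₁ ⟨m j₀, hN⟩).isLt
      omega
    set m' : Fin l → N := fun j => ⟨m j, hall j⟩ with hm'
    obtain ⟨j, j', hjj'⟩ := hχ₁ m'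
      (by
        intro h0
        apply hj₀
        have := congrFun h0 j₀
        simpa [hm', Subtype.ext_iff] using this)
      (by
        intro i
        apply Subtype.ext
        push_cast
        simpa using hsum i)
    apply hjj'
    have hc := hcol j j'
    simp only [hχ, dif_pos (hall j), dif_pos (hall j')] at hc
    have := congrArg Fin.val hc
    simp only [Fin.coe_castAdd] at this
    exact Fin.ext this
  · have hall : ∀ j, m j ∉ N := by
      intro j hj
      have hc := hcol j₀ j
      simp only [hχ, dif_neg hN, dif_pos hj] at hc
      have := congrArg Fin.val hc
      simp only [Fin.coe_natAdd, Fin.coe_castAdd] at this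
      have h1 := (χ₁ ⟨m j, hj⟩).isLt
      omega
    set m'' : Fin l → M ⧸ N := fun j => Submodule.Quotient.mk (m j) with hm''
    obtain ⟨j, j', hjj'⟩ := hχ₂ m''
      (by
        intro h0
        apply hall j₀
        have := congrFun h0 j₀
        simpa [hm'', Submodule.Quotient.mk_eq_zero] using this)
      (by
        intro i
        have : (Submodule.mkQ N) (∑ j, A i j • m j) = 0 := by
          rw [hsum i]; simp
        simpa [hm'', map_sum] using this)
    apply hjj'
    have hc := hcol j j'
    simp only [hχ, dif_neg (hall j), dif_neg (hall j')] at hc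
    have hv := congrArg Fin.val hc
    simp only [Fin.coe_natAdd] at hv
    have : χ₂ (Submodule.Quotient.mk (m j)) = χ₂ (Submodule.Quotient.mk (m j')) :=
      Fin.ext (by omega)
    simpa [hm''] using this
end

section
/- Let R be a commutative ring, M = ⨁_{i=1}^t M_i a finite direct sum of R-modules, and A a matrix over R. Then A is partition regular over M (for all finite numbers of colours) if and only if A is partition regular over M_i for some i. -/
open BigOperators

theorem pr_directSum_iff {R : Type*} [CommRing R] {k l t : ℕ}
    (A : Matrix (Fin k) (Fin l) R) (M : Fin t → Type*)
    [∀ i, AddCommGroup (M i)] [∀ i, Module R (M i)] :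
    IsPRAll A (Π i, M i) ↔ ∃ i, IsPRAll A (M i) := by
  constructor
  · intro h
    by_contra hcon
    push_neg at hcon
    -- for each i, obtain a bad colouring
    have hbad : ∀ i, ∃ r : ℕ, 1 ≤ r ∧ ∃ χ : M i → Fin r,
        ∀ m : Fin l → M i, m ≠ 0 → (∀ i', ∑ j, A i' j • m j = 0) →
          ∃ j j', χ (m j) ≠ χ (m j') := by
      intro i
      have := hcon i
      unfold IsPRAll IsPR at this
      push_neg at this
      obtain ⟨r, hr, χ, hχ⟩ := this
      exact ⟨r, hr, χ, hχ⟩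
    choose r hr χi hχi using hbad
    haveI : ∀ i, Nonempty (Fin (r i)) := fun i => ⟨⟨0, hr i⟩⟩
    set N := Fintype.card (Π i, Fin (r i)) with hN
    have hN1 : 1 ≤ N := Fintype.card_pos
    let e := Fintype.equivFin (Π i, Fin (r i))
    obtain ⟨m, hm0, hsol, hmono⟩ := h N hN1 (fun v => e (fun i => χi i (v i)))
    obtain ⟨j0, hj0⟩ := Function.ne_iff.mp hm0
    obtain ⟨i0, hi0⟩ := Function.ne_iff.mp hj0
    have hmi0 : (fun j => m j i0) ≠ 0 := fun h => hi0 (congrFun h j0)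
    have hsoli : ∀ i', ∑ j, A i' j • m j i0 = 0 := by
      intro i'
      have := congrFun (hsol i') i0
      simpa using this
    obtain ⟨j, j', hne⟩ := hχi i0 _ hmi0 hsoli
    exact hne (congrFun (e.injective (hmono j j')) i0)
  · rintro ⟨i, hi⟩ r hr χ
    obtain ⟨m, hm0, hsol, hmono⟩ := hi r hr (fun x => χ (Pi.single i x))
    refine ⟨fun j => Pi.single i (m j), ?_, ?_, fun j j' => hmono j j'⟩
    · intro h
      apply hm0
      funext j
      have := congrFun (congrFun h j) i
      simpa using this
    · intro i'
      have : ∑ j, A i' j • (LinearMap.single R M i) (m j)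
          = (LinearMap.single R M i) (∑ j, A i' j • m j) := by
        rw [map_sum]
        simp [map_smul]
      simpa [hsol i'] using this
end

section
/- Let R be a noetherian commutative ring, M a finitely generated R-module, and A a matrix over R. Then A is partition regular over M if and only if there exists an associated prime 𝔭 of M such that A (with entries reduced mod 𝔭) is partition regular over R/𝔭. -/
open BigOperators

/-!
Partition regularity passes up along injective linear maps, and if both a submodule `N ≤ X` and
`X ⧸ N` admit bad colourings, then so does `X` (colour `N` and its complement with disjoint
palettes). By Lasker–Noether, `M` embeds into a finite product of coprimary quotients `M ⧸ J`,
whose primes `√(J : M)` are the associated primes of `M`; a product has a bad colouring as soon as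
each factor does (colour coordinatewise). A coprimary module is killed by some `p ^ n`, and every
`t ∉ p` acts injectively on it. Removing its `p`-torsion submodule lowers `n`, and that submodule
is a finitely generated torsion-free `R ⧸ p`-module, so it embeds into a finite power of `R ⧸ p`.
-/

section PartitionRegular

variable {R : Type*} [CommRing R] {k l : ℕ} (A : Matrix (Fin k) (Fin l) R)
  {X Y : Type*} [AddCommGroup X] [Module R X] [AddCommGroup Y] [Module R Y]

def IsBadColouring {C : Type*} (χ : X → C) : Prop :=
  ∀ m : Fin l → X, (∀ i, ∑ j, A i j • m j = 0) → (∀ j j', χ (m j) = χ (m j')) → m = 0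

variable {A}

theorem not_isPRAll_iff_exists_isBadColouring :
    ¬ IsPRAll A X ↔ ∃ r, ∃ χ : X → Fin r, IsBadColouring A χ := by
  constructor
  · intro h
    by_contra! hbad
    refine h fun r _ χ => ?_
    obtain ⟨m, hsol, hmono, hm⟩ : ∃ m : Fin l → X, (∀ i, ∑ j, A i j • m j = 0) ∧
        (∀ j j', χ (m j) = χ (m j')) ∧ m ≠ 0 := by
      simpa [IsBadColouring] using hbad r χ
    exact ⟨m, hm, hsol, hmono⟩
  · rintro ⟨r, χ, hχ⟩ h
    obtain ⟨m, hm, hsol, hmono⟩ := h r (Fin.pos_iff_nonempty.mpr ⟨χ 0⟩) χ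
    exact hm (hχ m hsol hmono)

theorem IsBadColouring.not_isPRAll {C : Type*} [Finite C] {χ : X → C}
    (hχ : IsBadColouring A χ) : ¬ IsPRAll A X := by
  obtain ⟨r, ⟨e⟩⟩ := Finite.exists_equiv_fin C
  refine not_isPRAll_iff_exists_isBadColouring.mpr ⟨r, e ∘ χ, fun m hsol hmono => ?_⟩
  exact hχ m hsol fun j j' => e.injective (hmono j j')

theorem not_isPRAll_of_subsingleton [Subsingleton X] : ¬ IsPRAll A X :=
  IsBadColouring.not_isPRAll (χ := fun _ : X => ()) fun _ _ _ => Subsingleton.elim _ _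

theorem IsPRAll.of_injective (h : IsPRAll A X) {f : X →ₗ[R] Y} (hf : Function.Injective f) :
    IsPRAll A Y := by
  intro r hr χ
  obtain ⟨m, hm, hsol, hmono⟩ := h r hr (χ ∘ f)
  refine ⟨f ∘ m, fun hfm => hm ?_, fun i => ?_, hmono⟩
  · exact funext fun j => hf (by simpa using congrFun hfm j)
  · simpa [map_sum, map_smul] using congrArg f (hsol i)

theorem IsPRAll.exists_of_pi {ι : Type*} [Finite ι] {X : ι → Type*} [∀ i, AddCommGroup (X i)]
    [∀ i, Module R (X i)] (h : IsPRAll A (∀ i, X i)) : ∃ i, IsPRAll A (X i) := by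
  by_contra! hX
  choose r χ hχ using fun i => not_isPRAll_iff_exists_isBadColouring.mp (hX i)
  refine IsBadColouring.not_isPRAll (χ := fun x i => χ i (x i)) (fun m hsol hmono => ?_) h
  funext j i
  refine congrFun (hχ i (fun j => m j i) (fun i' => ?_) fun j j' => congrFun (hmono j j') i) j
  simpa using congrFun (hsol i') i

theorem IsPRAll.submodule_or_quotient (h : IsPRAll A X) (N : Submodule R X) :
    IsPRAll A N ∨ IsPRAll A (X ⧸ N) := by
  classical
  by_contra! hN
  obtain ⟨r₁, χ₁, hχ₁⟩ := not_isPRAll_iff_exists_isBadColouring.mp hN.1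
  obtain ⟨r₂, χ₂, hχ₂⟩ := not_isPRAll_iff_exists_isBadColouring.mp hN.2
  let χ : X → Fin r₁ ⊕ Fin r₂ := fun x =>
    if hx : x ∈ N then .inl (χ₁ ⟨x, hx⟩) else .inr (χ₂ (N.mkQ x))
  refine IsBadColouring.not_isPRAll (χ := χ) (fun m hsol hmono => ?_) h
  by_cases hmN : ∀ j, m j ∈ N
  · have hm := hχ₁ (fun j => ⟨m j, hmN j⟩) (fun i => Subtype.ext (by simpa using hsol i))
      fun j j' => by simpa [χ, hmN j, hmN j'] using hmono j j'
    exact funext fun j => congrArg Subtype.val (congrFun hm j)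
  · push Not at hmN
    obtain ⟨j₀, hj₀⟩ := hmN
    have hmN : ∀ j, m j ∉ N := fun j hj => by simpa [χ, hj, hj₀] using hmono j j₀
    have hm := hχ₂ (N.mkQ ∘ m)
      (fun i => by simpa [map_sum, map_smul] using congrArg N.mkQ (hsol i))
      fun j j' => by simpa [χ, hmN j, hmN j'] using hmono j j'
    exact absurd ((Submodule.Quotient.mk_eq_zero N).mp (congrFun hm j₀)) hj₀

theorem isPRAll_map_algebraMap_iff {S : Type*} [CommRing S] [Algebra R S] [Module S X]
    [IsScalarTower R S X] : IsPRAll (A.map (algebraMap R S)) X ↔ IsPRAll A X := by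
  simp only [IsPRAll, IsPR, Matrix.map_apply, algebraMap_smul]

end PartitionRegular

theorem Module.exists_injective_linearMap_pi_of_isTorsionFree {D X : Type*} [CommRing D]
    [IsDomain D] [AddCommGroup X] [Module D X] [Module.Finite D X] [Module.IsTorsionFree D X] :
    ∃ (ι : Type) (_ : Finite ι) (f : X →ₗ[D] ι → D), Function.Injective f := by
  classical
  obtain ⟨n, s, hs⟩ := Module.Finite.exists_fin (R := D) (M := X)
  obtain ⟨I, hI, hImax⟩ := exists_maximal_linearIndepOn D s
  let N := Submodule.span D (Set.range fun i : I => s i)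
  have hmul : ∀ i, ∃ a : D, a ≠ 0 ∧ a • s i ∈ N := by
    intro i
    by_cases hi : i ∈ I
    · refine ⟨1, one_ne_zero, ?_⟩
      simpa using Submodule.subset_span (Set.mem_range_self (⟨i, hi⟩ : I))
    · simpa [N, Set.image_eq_range] using hImax i hi
  choose a ha0 ha using hmul
  -- `∏ i, a i` multiplies `X` into the free module `N` and, `X` being torsion-free, injectively.
  have hc0 : ∏ i, a i ≠ 0 := Finset.prod_ne_zero_iff.mpr fun i _ => ha0 i
  have hc : ∀ x, (LinearMap.lsmul D X (∏ i, a i)) x ∈ N := by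
    suffices LinearMap.range (LinearMap.lsmul D X (∏ i, a i)) ≤ N from
      fun x => this (LinearMap.mem_range_self _ x)
    rw [LinearMap.range_eq_map, ← hs, Submodule.map_span_le]
    rintro _ ⟨i, rfl⟩
    rw [← Finset.prod_erase_mul _ _ (Finset.mem_univ i), LinearMap.lsmul_apply, mul_smul]
    exact N.smul_mem _ (ha i)
  refine ⟨I, inferInstance, (Basis.span hI).equivFun.toLinearMap ∘ₗ
    (LinearMap.lsmul D X (∏ i, a i)).codRestrict N hc, ?_⟩
  exact (Basis.span hI).equivFun.injective.comp fun x y hxy =>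
    smul_right_injective X hc0 (congrArg Subtype.val hxy)

section TorsionBySet

open Module Submodule

variable {R X : Type*} [CommRing R] [AddCommGroup X] [Module R X]

theorem Module.IsTorsionBySet.quotient_torsionBySet {I J : Ideal R}
    (h : IsTorsionBySet R X ↑(I * J)) : IsTorsionBySet R (X ⧸ torsionBySet R X ↑I) ↑J := by
  intro x a
  induction x using Submodule.Quotient.induction_on with
  | H x =>
    rw [← Submodule.Quotient.mk_smul, Submodule.Quotient.mk_eq_zero, mem_torsionBySet_iff]
    rintro ⟨b, hb⟩
    rw [smul_smul]
    exact h (a := ⟨b * a, Ideal.mul_mem_mul hb a.2⟩)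

theorem IsSMulRegular.quotient_torsionBySet {t : R} (ht : IsSMulRegular X t) (s : Set R) :
    IsSMulRegular (X ⧸ torsionBySet R X s) t := by
  refine (isSMulRegular_quotient_iff_mem_of_smul_mem _ t).mpr fun x hx => ?_
  rw [mem_torsionBySet_iff] at hx ⊢
  exact fun b => ht.right_eq_zero_of_smul (by rw [smul_comm, hx b])

theorem Module.IsTorsionBySet.exists_injective_linearMap_pi_quotient {p : Ideal R} [p.IsPrime]
    [Module.Finite R X] (hX : IsTorsionBySet R X p) (hreg : ∀ t ∉ p, IsSMulRegular X t) :
    ∃ (ι : Type) (_ : Finite ι) (f : X →ₗ[R] ι → R ⧸ p), Function.Injective f := by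
  let := hX.module
  have := hX.isScalarTower (S := R)
  have : Module.Finite (R ⧸ p) X := Module.Finite.of_restrictScalars_finite R _ _
  have : IsTorsionFree (R ⧸ p) X := ⟨fun r hr => by
    obtain ⟨t, rfl⟩ := Ideal.Quotient.mk_surjective r
    exact hreg t fun ht => hr.ne_zero (Ideal.Quotient.eq_zero_iff_mem.mpr ht)⟩
  obtain ⟨ι, hι, f, hf⟩ := exists_injective_linearMap_pi_of_isTorsionFree (D := R ⧸ p) (X := X)
  exact ⟨ι, hι, f.restrictScalars R, hf⟩

end TorsionBySet

section Noetherian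

open Module Submodule

variable {R : Type*} [CommRing R] [IsNoetherianRing R] {k l : ℕ} {A : Matrix (Fin k) (Fin l) R}

theorem IsPRAll.quotient_of_isTorsionBySet_pow {p : Ideal R} [p.IsPrime] (n : ℕ) {X : Type*}
    [AddCommGroup X] [Module R X] [Module.Finite R X] (hX : IsTorsionBySet R X ↑(p ^ n))
    (hreg : ∀ t ∉ p, IsSMulRegular X t) (h : IsPRAll A X) : IsPRAll A (R ⧸ p) := by
  induction n generalizing X with
  | zero =>
    have : Subsingleton X := ⟨fun x y => by
      rw [← one_smul R x, ← one_smul R y, hX (a := ⟨1, by simp⟩), hX (a := ⟨1, by simp⟩)]⟩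
    exact absurd h not_isPRAll_of_subsingleton
  | succ n ih =>
    rcases h.submodule_or_quotient (torsionBySet R X p) with hK | hQ
    · obtain ⟨ι, _, f, hf⟩ := (torsionBySet_isTorsionBySet (R := R) (M := X) ↑p)
        |>.exists_injective_linearMap_pi_quotient fun t ht => (hreg t ht).submodule _ t
      obtain ⟨-, hp⟩ := (hK.of_injective hf).exists_of_pi
      exact hp
    · rw [pow_succ'] at hX
      exact ih hX.quotient_torsionBySet (fun t ht => (hreg t ht).quotient_torsionBySet _) hQ

theorem IsPRAll.quotient_radical_colon_of_isPrimary {M : Type*} [AddCommGroup M] [Module R M]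
    [Module.Finite R M] {J : Submodule R M} (hJ : J.IsPrimary) (h : IsPRAll A (M ⧸ J)) :
    IsPRAll A (R ⧸ (J.colon Set.univ).radical) := by
  have := hJ.isPrime_radical_colon
  obtain ⟨n, hn⟩ := Ideal.exists_pow_le_of_le_radical_of_fg le_rfl
    (IsNoetherian.noetherian (J.colon Set.univ).radical)
  refine h.quotient_of_isTorsionBySet_pow n (fun x a => ?_) fun t ht => ?_
  · induction x using Submodule.Quotient.induction_on with
    | H x =>
      rw [← Submodule.Quotient.mk_smul, Submodule.Quotient.mk_eq_zero]
      exact mem_colon.mp (hn a.2) x (Set.mem_univ x)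
  · exact (isSMulRegular_quotient_iff_mem_of_smul_mem J t).mpr fun x hx =>
      (hJ.mem_or_mem hx).resolve_right ht

theorem IsPRAll.exists_isAssociatedPrime {M : Type*} [AddCommGroup M] [Module R M]
    [Module.Finite R M] (h : IsPRAll A M) :
    ∃ p : Ideal R, IsAssociatedPrime p M ∧ IsPRAll A (R ⧸ p) := by
  obtain ⟨t, ht⟩ := (isLasker R M).exists_isMinimalPrimaryDecomposition ⊥
  have hinj : Function.Injective (LinearMap.pi fun J : t => J.1.mkQ) := by
    refine (injective_iff_map_eq_zero _).mpr fun x hx => ?_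
    rw [← mem_bot R, ← ht.inf_eq, mem_finsetInf]
    exact fun J hJ => (Submodule.Quotient.mk_eq_zero J).mp (congrFun hx ⟨J, hJ⟩)
  obtain ⟨J, hJ⟩ := (h.of_injective hinj).exists_of_pi
  exact ⟨_, ht.mem_associatedPrimes J.2, hJ.quotient_radical_colon_of_isPrimary (ht.primary J.2)⟩

end Noetherian

theorem pr_module_iff_associatedPrime {R : Type*} [CommRing R] [IsNoetherianRing R]
    {k l : ℕ} (A : Matrix (Fin k) (Fin l) R)
    (M : Type*) [AddCommGroup M] [Module R M] [Module.Finite R M] :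
    IsPRAll A M ↔
      ∃ p : Ideal R, IsAssociatedPrime p M ∧
        IsPRAll (A.map (Ideal.Quotient.mk p)) (R ⧸ p) := by
  simp only [← Ideal.Quotient.algebraMap_eq, isPRAll_map_algebraMap_iff]
  refine ⟨IsPRAll.exists_isAssociatedPrime, fun ⟨p, hp, h⟩ => ?_⟩
  obtain ⟨-, f, hf⟩ := (isAssociatedPrime_iff_exists_injective_linearMap p M).mp hp
  exact h.of_injective hf
end

section
/- Let R ⊆ S be integral domains and A a matrix with entries in R. Then A satisfies the columns condition over R if and only if it satisfies the columns condition over S. -/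
/-!
Only the two clauses mentioning the entries of the matrix are affected by the change of rings.
The vanishing of the sums over `I 0` transfers along the injection `R → S`. For the span
clause, `Frac R` embeds into `Frac S`, and span membership of vectors with entries in a field `K`
is unchanged under a field extension `L / K`: for the nontrivial direction, a `K`-linear
retraction `π : L → K`, applied coordinatewise, turns an `L`-combination `∑ aⱼ • wⱼ` of
`K`-vectors into the `K`-combination `∑ π aⱼ • wⱼ`.
-/

open BigOperators

/-- The columns condition for a matrix over a domain, with the span taken in the
fraction field. -/
def ColumnsCondition {R : Type*} [CommRing R] [IsDomain R] {k l : ℕ}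
    (A : Matrix (Fin k) (Fin l) R) : Prop :=
  ∃ (m : ℕ) (I : Fin (m + 1) → Finset (Fin l)),
    (∀ t, (I t).Nonempty) ∧
    (∀ t t', t ≠ t' → Disjoint (I t) (I t')) ∧
    (∀ j : Fin l, ∃ t, j ∈ I t) ∧
    (∀ i : Fin k, ∑ j ∈ I 0, A i j = 0) ∧
    ∀ t : Fin (m + 1), 0 < t →
      (fun i : Fin k => algebraMap R (FractionRing R) (∑ j ∈ I t, A i j)) ∈
        Submodule.span (FractionRing R)
          ((fun j (i : Fin k) => algebraMap R (FractionRing R) (A i j)) ''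
            {j | ∃ t', t' < t ∧ j ∈ I t'})

open Submodule

theorem Submodule.algebraMap_comp_mem_span_iff {K L ι : Type*} [Field K] [Ring L] [Nontrivial L]
    [Algebra K L] {v : ι → K} {s : Set (ι → K)} :
    algebraMap K L ∘ v ∈ span L ((algebraMap K L ∘ ·) '' s) ↔ v ∈ span K s := by
  constructor
  · intro hv
    obtain ⟨π, hπ⟩ := (Algebra.linearMap K L).exists_leftInverse_of_injective
      (LinearMap.ker_eq_bot.mpr (algebraMap K L).injective)
    have hπ_algebraMap (x : K) : π (algebraMap K L x) = x := LinearMap.congr_fun hπ x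
    have key : ∀ x ∈ span L ((algebraMap K L ∘ ·) '' s), ∀ a : L,
        π.compLeft ι (a • x) ∈ span K s := by
      intro x hx
      induction hx using Submodule.span_induction with
      | mem x hx =>
        obtain ⟨w, hw, rfl⟩ := hx
        intro a
        have : π.compLeft ι (a • (algebraMap K L ∘ w)) = π a • w := by
          ext i
          simp [← Algebra.commutes, ← Algebra.smul_def, mul_comm]
        rw [this]
        exact smul_mem _ _ (subset_span hw)
      | zero => simp
      | add x y _ _ hx hy => intro a; simpa only [smul_add, map_add] using add_mem (hx a) (hy a)
      | smul c x _ hx => intro a; simpa only [smul_smul] using hx (a * c)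
    have hv' : π.compLeft ι (algebraMap K L ∘ v) = v := funext fun i => hπ_algebraMap (v i)
    simpa only [one_smul, hv'] using key _ hv 1
  · intro hv
    have := mem_map_of_mem (f := (Algebra.linearMap K L).compLeft ι) hv
    rw [map_span] at this
    exact span_le_restrictScalars K L _ this

theorem Submodule.algebraMap_comp_mem_span_fractionRing_iff {R F ι J : Type*} [CommRing R]
    [IsDomain R] [Field F] [Algebra R F] [FaithfulSMul R F] {v : ι → R} {c : J → ι → R}
    {P : Set J} :
    algebraMap R (FractionRing R) ∘ v ∈
        span (FractionRing R) ((fun j => algebraMap R (FractionRing R) ∘ c j) '' P) ↔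
      algebraMap R F ∘ v ∈ span F ((fun j => algebraMap R F ∘ c j) '' P) := by
  let := FractionRing.liftAlgebra R F
  rw [← algebraMap_comp_mem_span_iff (L := F), Set.image_image]
  simp only [Function.comp_def, ← IsScalarTower.algebraMap_apply]

theorem columnsCondition_iff_of_subring {R S : Type*} [CommRing R] [IsDomain R]
    [CommRing S] [IsDomain S] [Algebra R S]
    (hinj : Function.Injective (algebraMap R S))
    {k l : ℕ} (A : Matrix (Fin k) (Fin l) R) :
    ColumnsCondition A ↔ ColumnsCondition (A.map (algebraMap R S)) := by
  have := (faithfulSMul_iff_algebraMap_injective R S).mpr hinj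
  have hspan (s : Finset (Fin l)) (P : Set (Fin l)) :
      (fun i => algebraMap R (FractionRing R) (∑ j ∈ s, A i j)) ∈
          span (FractionRing R) ((fun j i => algebraMap R (FractionRing R) (A i j)) '' P) ↔
        (fun i => algebraMap S (FractionRing S) (∑ j ∈ s, A.map (algebraMap R S) i j)) ∈
          span (FractionRing S)
            ((fun j i => algebraMap S (FractionRing S) (A.map (algebraMap R S) i j)) '' P) := by
    simp only [Matrix.map_apply, ← map_sum, ← IsScalarTower.algebraMap_apply]
    exact algebraMap_comp_mem_span_fractionRing_iff (F := FractionRing S) (c := fun j i => A i j)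
  unfold ColumnsCondition
  refine exists₂_congr fun m I => and_congr_right' <| and_congr_right' <| and_congr_right' <|
    and_congr (forall_congr' fun i => ?_) (forall₂_congr fun t _ => hspan _ _)
  simp only [Matrix.map_apply, ← map_sum, map_eq_zero_iff _ hinj]
end

section
/- Let R be a domain with fraction field K, A a matrix over R, R' a subring of K containing all entries of A, and K' the fraction field of R'. If A is partition regular over R, then A is partition regular over the rational function field K'(t). -/
/-!
Partition regularity only ever uses finitely many elements: by compactness of the space of
`r`-colourings, already the span `P` of a finite set carries monochromatic solutions for every
colouring, and colourings of a module pull back along injective linear maps. Embed `R` into `K`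
and view `K` as a `K'`-vector space through `K' → K`, the lift of `R' ⊆ K`; the matrix acts
`K'`-linearly since its entries come from `R'`. Then `P` is finite-dimensional over `K'`, hence
embeds `K'`-linearly into the infinite-dimensional `K'(t)`.
-/

open BigOperators

universe u v

namespace IsPR

variable {S : Type*} [CommRing S] {k l : ℕ} {A : Matrix (Fin k) (Fin l) S}
  {M N : Type*} [AddCommGroup M] [Module S M] [AddCommGroup N] [Module S N] {r : ℕ}

theorem of_injective (f : M →ₗ[S] N) (hf : Function.Injective f) (h : IsPR A M r) :
    IsPR A N r := by
  intro χ
  obtain ⟨m, hm0, hsol, hmono⟩ := h (χ ∘ f)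
  refine ⟨f ∘ m, fun h0 => hm0 ?_, fun i => ?_, hmono⟩
  · exact funext fun j => hf (by simpa using congrFun h0 j)
  · simp only [Function.comp_apply, ← map_smul, ← map_sum, hsol i, map_zero]

theorem iff_of_smul_eq {S' : Type*} [CommRing S'] [Module S' M] {A' : Matrix (Fin k) (Fin l) S'}
    (hA : ∀ i j (x : M), A i j • x = A' i j • x) : IsPR A M r ↔ IsPR A' M r := by
  simp only [IsPR, hA]

theorem exists_finset (h : IsPR A M r) :
    ∃ T : Finset M, ∀ χ : M → Fin r, ∃ m : Fin l → M, (∀ j, m j ∈ T) ∧ m ≠ 0 ∧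
      (∀ i, ∑ j, A i j • m j = 0) ∧ ∀ j j', χ (m j) = χ (m j') := by
  classical
  by_contra! hT
  let bad (T : Finset M) : Set (M → Fin r) :=
    {χ | ∀ m : Fin l → M, (∀ j, m j ∈ T) → m ≠ 0 →
      (∀ i, ∑ j, A i j • m j = 0) → ∃ j j', χ (m j) ≠ χ (m j')}
  have hclosed (T : Finset M) : IsClosed (bad T) := by
    simp only [bad, Set.ofPred_forall, Set.ofPred_exists]
    refine isClosed_iInter fun m => isClosed_iInter fun _ => isClosed_iInter fun _ =>
      isClosed_iInter fun _ => isClosed_iUnion_of_finite fun j =>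
        isClosed_iUnion_of_finite fun j' => ?_
    exact (isClosed_discrete {p : Fin r × Fin r | p.1 ≠ p.2}).preimage
      ((continuous_apply (A := fun _ : M => Fin r) (m j)).prodMk (continuous_apply (m j')))
  have hdir : Directed (· ⊇ ·) bad := fun T T' =>
    ⟨T ∪ T', fun χ hχ m hm => hχ m fun j => Finset.mem_union_left _ (hm j),
      fun χ hχ m hm => hχ m fun j => Finset.mem_union_right _ (hm j)⟩
  obtain ⟨χ, hχ⟩ := IsCompact.nonempty_iInter_of_directed_nonempty_isCompact_isClosed bad hdir
    hT (fun T => (hclosed T).isCompact) hclosed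
  obtain ⟨m, hm0, hsol, hmono⟩ := h χ
  obtain ⟨j, j', hne⟩ := Set.mem_iInter.mp hχ (Finset.univ.image m) m
    (fun j => Finset.mem_image_of_mem m (Finset.mem_univ j)) hm0 hsol
  exact hne (hmono j j')

theorem exists_fg (h : IsPR A M r) : ∃ P : Submodule S M, P.FG ∧ IsPR A P r := by
  classical
  obtain ⟨T, hT⟩ := h.exists_finset
  refine ⟨Submodule.span S T, ⟨T, rfl⟩, fun χ => ?_⟩
  let χM (x : M) : Fin r :=
    if hx : x ∈ Submodule.span S (T : Set M) then χ ⟨x, hx⟩ else χ 0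
  obtain ⟨m, hmT, hm0, hsol, hmono⟩ := hT χM
  have hm (j) : m j ∈ Submodule.span S (T : Set M) := Submodule.subset_span (hmT j)
  refine ⟨fun j => ⟨m j, hm j⟩, fun h0 => hm0 (funext fun j => congrArg Subtype.val
    (congrFun h0 j)), fun i => Subtype.ext (by simpa using hsol i), fun j j' => ?_⟩
  simpa [χM, hm] using hmono j j'

end IsPR

theorem IsPR.of_not_finite {F : Type*} [Field F] {k l : ℕ} {A : Matrix (Fin k) (Fin l) F}
    {M : Type u} {N : Type v} [AddCommGroup M] [Module F M] [AddCommGroup N] [Module F N] {r : ℕ}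
    (hN : ¬ Module.Finite F N) (h : IsPR A M r) : IsPR A N r := by
  obtain ⟨P, hPfg, hP⟩ := h.exists_fg
  have : Module.Finite F P := Module.Finite.iff_fg.mpr hPfg
  have hrank : Cardinal.lift.{v} (Module.rank F P) < Cardinal.lift.{u} (Module.rank F N) :=
    calc Cardinal.lift.{v} (Module.rank F P) < Cardinal.aleph0 :=
          Cardinal.lift_lt_aleph0.mpr (Module.rank_lt_aleph0_iff.mpr this)
      _ ≤ Cardinal.lift.{u} (Module.rank F N) :=
          Cardinal.aleph0_le_lift.mpr (not_lt.mp (mt Module.rank_lt_aleph0_iff.mp hN))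
  obtain ⟨f, hf⟩ := Module.Free.exists_linearMap_injective_of_lift_rank_lt hrank
  exact hP.of_injective f hf

theorem RatFunc.not_finite (K : Type*) [Field K] : ¬ Module.Finite K (RatFunc K) := fun _ =>
  Polynomial.not_finite (R := K) <| .of_injective
    (IsScalarTower.toAlgHom K (Polynomial K) (RatFunc K)).toLinearMap
    (RatFunc.algebraMap_injective K)

theorem pr_over_ratFunc_general {R : Type*} [CommRing R] {k l : ℕ}
    (A : Matrix (Fin k) (Fin l) R)
    (K : Type*) [Field K] [Algebra R K] [IsFractionRing R K]
    (R' : Subring K)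
    (hA : ∀ i j, algebraMap R K (A i j) ∈ R')
    (K' : Type*) [Field K'] [Algebra R' K'] [IsFractionRing R' K']
    (h : IsPRAll A R) :
    IsPRAll
      (Matrix.of fun i j =>
        algebraMap K' (RatFunc K')
          (algebraMap R' K' ⟨algebraMap R K (A i j), hA i j⟩))
      (RatFunc K') := by
  intro r hr
  have hR' : Function.Injective R'.subtype := Subtype.val_injective
  let : Algebra K' K := (IsFractionRing.lift hR').toAlgebra
  let A' : Matrix (Fin k) (Fin l) K' :=
    Matrix.of fun i j => algebraMap R' K' ⟨algebraMap R K (A i j), hA i j⟩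
  have hK : IsPR A K r :=
    (h r hr).of_injective (Algebra.linearMap R K) (IsFractionRing.injective R K)
  have hA' (i j) : algebraMap K' K (A' i j) = algebraMap R K (A i j) :=
    IsFractionRing.lift_algebraMap hR' _
  have hK' : IsPR A' K r :=
    (IsPR.iff_of_smul_eq fun i j x => by rw [Algebra.smul_def, Algebra.smul_def, hA']).mp hK
  exact (IsPR.iff_of_smul_eq fun i j x => algebraMap_smul (RatFunc K') _ x).mpr
    (hK'.of_not_finite (RatFunc.not_finite K'))

theorem pr_over_ratFunc {R : Type*} [CommRing R] [IsDomain R] {k l : ℕ}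
    (A : Matrix (Fin k) (Fin l) R)
    (K : Type*) [Field K] [Algebra R K] [IsFractionRing R K]
    (R' : Subring K)
    (hA : ∀ i j, algebraMap R K (A i j) ∈ R')
    (K' : Type*) [Field K'] [Algebra R' K'] [IsFractionRing R' K']
    (h : IsPRAll A R) :
    IsPRAll
      (Matrix.of fun i j =>
        algebraMap K' (RatFunc K')
          (algebraMap R' K' ⟨algebraMap R K (A i j), hA i j⟩))
      (RatFunc K') :=
  pr_over_ratFunc_general A K R' hA K' h
end

section
/- Let R be a commutative ring and b ∈ R. The 3×3 matrix B with rows (1, 1, −1), (0, b, 0), (0, 0, b) is partition regular over R if and only if the annihilator ann(b) = {x ∈ R : xb = 0} is infinite. -/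
/-!
If `ann b` is finite, colour it injectively: a monochromatic solution then has `x = y = z`, and
`x + y = z` forces it to vanish. If `ann b` is infinite, choose greedily a sequence in `ann b` none
of whose nonempty finite sums is `0` (each new term avoids the negatives of the finitely many
subset sums so far). By Hindman's theorem some colour class contains all finite sums of a
sequence `d`; then `x = d₀`, `y = d₁`, `z = d₀ + d₁` is a monochromatic solution with `x ≠ 0`.
-/

open BigOperators

namespace Set.Infinite

variable {G : Type*} [AddCommGroup G] [DecidableEq G] {A : Set G}

noncomputable def avoidingNeg (hA : A.Infinite) (T : Finset G) : G :=
  (hA.sdiff (T.image Neg.neg).finite_toSet).nonempty.choose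

theorem avoidingNeg_mem (hA : A.Infinite) (T : Finset G) : hA.avoidingNeg T ∈ A :=
  (hA.sdiff (T.image Neg.neg).finite_toSet).nonempty.choose_spec.1

theorem avoidingNeg_add_ne_zero (hA : A.Infinite) {T : Finset G} {t : G} (ht : t ∈ T) :
    hA.avoidingNeg T + t ≠ 0 := fun h =>
  (hA.sdiff (T.image Neg.neg).finite_toSet).nonempty.choose_spec.2 <|
    Finset.mem_image.2 ⟨t, ht, (eq_neg_of_add_eq_zero_left h).symm⟩

noncomputable def greedySubsetSums (hA : A.Infinite) : ℕ → Finset G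
  | 0 => {0}
  | n + 1 => greedySubsetSums hA n ∪
      (greedySubsetSums hA n).image (hA.avoidingNeg (greedySubsetSums hA n) + ·)

noncomputable def greedySeq (hA : A.Infinite) (n : ℕ) : G :=
  hA.avoidingNeg (hA.greedySubsetSums n)

theorem monotone_greedySubsetSums (hA : A.Infinite) : Monotone hA.greedySubsetSums :=
  monotone_nat_of_le_succ fun _ => Finset.subset_union_left

theorem sum_greedySeq_mem (hA : A.Infinite) {s : Finset ℕ} {n : ℕ} (hs : ∀ i ∈ s, i < n) :
    ∑ i ∈ s, hA.greedySeq i ∈ hA.greedySubsetSums n := by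
  induction s using Finset.induction_on_max generalizing n with
  | empty => exact hA.monotone_greedySubsetSums (Nat.zero_le n) (Finset.mem_singleton_self 0)
  | insert k s hlt ih =>
    have hk : k < n := hs k (Finset.mem_insert_self k s)
    rw [Finset.sum_insert fun hks => (hlt k hks).false]
    exact hA.monotone_greedySubsetSums hk <| Finset.mem_union_right _ <|
      Finset.mem_image_of_mem _ (ih hlt)

theorem sum_greedySeq_ne_zero (hA : A.Infinite) {s : Finset ℕ} (hs : s.Nonempty) :
    ∑ i ∈ s, hA.greedySeq i ≠ 0 := by
  induction s using Finset.induction_on_max with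
  | empty => exact absurd hs Finset.not_nonempty_empty
  | insert k s hlt _ =>
    rw [Finset.sum_insert fun hks => (hlt k hks).false]
    exact hA.avoidingNeg_add_ne_zero (hA.sum_greedySeq_mem hlt)

end Set.Infinite

theorem Set.Infinite.exists_seq_sum_ne_zero {G : Type*} [AddCommGroup G] {A : Set G}
    (hA : A.Infinite) :
    ∃ a : ℕ → G, (∀ n, a n ∈ A) ∧ ∀ s : Finset ℕ, s.Nonempty → ∑ i ∈ s, a i ≠ 0 := by
  classical
  exact ⟨hA.greedySeq, fun _ => hA.avoidingNeg_mem _, fun _ => hA.sum_greedySeq_ne_zero⟩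

theorem Hindman.FS.exists_eq_finsetSum {M : Type*} [AddCommMonoid M] {a : Stream' M} {m : M}
    (hm : m ∈ Hindman.FS a) : ∃ s : Finset ℕ, s.Nonempty ∧ m = ∑ i ∈ s, a.get i := by
  induction hm with
  | head' a => exact ⟨{0}, Finset.singleton_nonempty 0, by simp [Stream'.head]⟩
  | tail' a m _ ih =>
    obtain ⟨s, hs, rfl⟩ := ih
    exact ⟨s.map (addRightEmbedding 1), hs.map, by simp [Stream'.get_tail]⟩
  | cons' a m _ ih =>
    obtain ⟨s, hs, rfl⟩ := ih
    refine ⟨Finset.cons 0 (s.map (addRightEmbedding 1)) (by simp), Finset.cons_nonempty _, ?_⟩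
    simp [Stream'.get_tail, Stream'.head]

theorem exists_ne_zero_monochromatic_add {G κ : Type*} [AddCommGroup G] [Infinite G] [Finite κ]
    (χ : G → κ) : ∃ x y : G, x ≠ 0 ∧ χ y = χ x ∧ χ (x + y) = χ x := by
  obtain ⟨a, -, ha⟩ := (Set.infinite_univ (α := G)).exists_seq_sum_ne_zero
  have hcover : Hindman.FS a ⊆ ⋃₀ Set.range fun k => Hindman.FS a ∩ χ ⁻¹' {k} :=
    fun x hx => ⟨_, ⟨χ x, rfl⟩, hx, rfl⟩
  obtain ⟨-, ⟨k, rfl⟩, d, hd⟩ :=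
    Hindman.FS_partition_regular a _ (Set.finite_range _) hcover
  have hx : d.head ∈ Hindman.FS a ∩ χ ⁻¹' {k} := hd (Hindman.FS.head d)
  have hy : d.tail.head ∈ Hindman.FS a ∩ χ ⁻¹' {k} :=
    hd (Hindman.FS.tail _ _ (Hindman.FS.head _))
  have hxy : d.head + d.tail.head ∈ Hindman.FS a ∩ χ ⁻¹' {k} :=
    hd (Hindman.FS.cons _ _ (Hindman.FS.head _))
  obtain ⟨s, hs, hsum⟩ := Hindman.FS.exists_eq_finsetSum hx.1
  refine ⟨d.head, d.tail.head, hsum ▸ ha s hs, ?_, ?_⟩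
  · rw [hy.2, hx.2]
  · rw [hxy.2, hx.2]

theorem IsPRAll.exists_monochromatic {S M κ : Type*} [CommRing S] [AddCommGroup M] [Module S M]
    [Finite κ] [Nonempty κ] {k l : ℕ} {A : Matrix (Fin k) (Fin l) S} (hA : IsPRAll A M)
    (χ : M → κ) : ∃ m : Fin l → M, m ≠ 0 ∧ (∀ i, ∑ j, A i j • m j = 0) ∧
      ∀ j j', χ (m j) = χ (m j') := by
  let e := Finite.equivFin κ
  obtain ⟨m, hm0, hmA, hmono⟩ := hA _ Nat.card_pos (e ∘ χ)
  exact ⟨m, hm0, hmA, fun j j' => e.injective (hmono j j')⟩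

theorem matrixB_solution_iff {R : Type*} [CommRing R] (b : R) (m : Fin 3 → R) :
    (∀ i, ∑ j, !![(1 : R), 1, -1; 0, b, 0; 0, 0, b] i j • m j = 0) ↔
      m 0 + m 1 = m 2 ∧ m 1 * b = 0 ∧ m 2 * b = 0 := by
  simp [Fin.forall_fin_succ, Fin.sum_univ_three, add_neg_eq_zero, mul_comm b]

theorem infinite_of_isPRAll_matrixB {R : Type*} [CommRing R] {b : R}
    (h : IsPRAll (!![(1 : R), 1, -1; 0, b, 0; 0, 0, b]) R) : {x : R | x * b = 0}.Infinite := by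
  set A := {x : R | x * b = 0}
  intro hfin
  have : Finite A := hfin.to_subtype
  classical
  obtain ⟨m, hm0, hmB, hmono⟩ :=
    h.exists_monochromatic fun x => if hx : x ∈ A then some (⟨x, hx⟩ : A) else none
  obtain ⟨h01, h1, h2⟩ := (matrixB_solution_iff b m).1 hmB
  have hA : ∀ j, m j ∈ A := by
    have h0 : m 0 * b = 0 := by linear_combination b * h01 + h2 - h1
    exact Fin.forall_fin_succ.2 ⟨h0, Fin.forall_fin_two.2 ⟨h1, h2⟩⟩
  have heq : ∀ j j', m j = m j' := fun j j' => by simpa [hA j, hA j'] using hmono j j'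
  have h00 : m 0 = 0 := by linear_combination h01 - heq 1 0 + heq 2 0
  exact hm0 (funext fun j => (heq j 0).trans h00)

theorem isPRAll_matrixB_of_infinite {R : Type*} [CommRing R] {b : R}
    (h : {x : R | x * b = 0}.Infinite) : IsPRAll (!![(1 : R), 1, -1; 0, b, 0; 0, 0, b]) R := by
  intro r _ χ
  let K := (AddMonoidHom.mulRight b).ker
  have : Infinite K := h.to_subtype
  obtain ⟨x, y, hx0, hy, hxy⟩ := exists_ne_zero_monochromatic_add (χ ∘ (↑) : K → Fin r)
  have hcol : ∀ j, χ (![(x : R), y, (x + y : K)] j) = χ x := by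
    simpa [Fin.forall_fin_succ] using ⟨hy, hxy⟩
  refine ⟨![(x : R), y, (x + y : K)], fun h0 => hx0 (Subtype.ext (congrFun h0 0)),
    (matrixB_solution_iff b _).2 ⟨rfl, y.2, (x + y).2⟩, fun j j' => (hcol j).trans (hcol j').symm⟩

theorem pr_matrixB_iff_ann_infinite {R : Type*} [CommRing R] (b : R) :
    IsPRAll (!![(1 : R), 1, -1; 0, b, 0; 0, 0, b]) R ↔
      {x : R | x * b = 0}.Infinite :=
  ⟨infinite_of_isPRAll_matrixB, isPRAll_matrixB_of_infinite⟩
end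

section
/- Let R be a commutative ring, M an R-module, a₁,...,a_l ∈ R, b ∈ M nonzero, and a = a₁ + ... + a_l. The following are equivalent: (1) the equation a₁m₁ + ... + a_l m_l = b is partition regular over M; (2) this equation has a constant solution m₁ = ... = m_l = m in M; (3) b ∈ aM. -/
open BigOperators

/-!
A constant solution is monochromatic, and `∑ aᵢ • m = (∑ aᵢ) • m`. Conversely, if `b ∉ aM`,
some character `φ : M → ℚ/ℤ` kills `aM` but not `b`. Colour `x` by the cells, in a fine
partition of the circle into intervals, of the points `φ (aᵢ • x)` (Straus' colouring).
For a monochromatic solution `m` and any `y` of the same colour as the `mᵢ`,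
`φ b = ∑ (φ (aᵢ • mᵢ) - φ (aᵢ • y))`, because the subtracted terms add up to `φ (a • y) = 0`.
But each summand lifts to a tiny rational, and no tiny rational represents the point `φ b ≠ 0`.
-/

namespace AddCircle

variable {𝕜 : Type*} [Field 𝕜] [LinearOrder 𝕜] [IsStrictOrderedRing 𝕜] [FloorRing 𝕜]
  {p : 𝕜} [Fact (0 < p)]

theorem exists_pos_forall_abs_lt_coe_ne {θ : AddCircle p} (hθ : θ ≠ 0) :
    ∃ ε > 0, ∀ q : 𝕜, |q| < ε → (q : AddCircle p) ≠ θ := by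
  have hp : 0 < p := Fact.out
  obtain ⟨t, ⟨ht_nonneg, htp⟩, rfl⟩ := eq_coe_Ico θ
  have ht_pos : 0 < t := ht_nonneg.lt_of_ne' (by rintro rfl; exact hθ (by simp))
  refine ⟨min t (p - t), lt_min ht_pos (sub_pos.2 htp), fun q hq hqt => ?_⟩
  have htq : ((t - q : 𝕜) : AddCircle p) = 0 := by rw [coe_sub, hqt, sub_self]
  -- `t - q` would be a multiple of `p` lying strictly between `0` and `p`.
  obtain ⟨n, hn⟩ := (coe_eq_zero_iff (p := p)).1 htq
  have hq_t := abs_lt.1 (hq.trans_le (min_le_left _ _))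
  have hq_pt := abs_lt.1 (hq.trans_le (min_le_right _ _))
  have hn_pos : (0 : ℤ) • p < n • p := by rw [hn, zero_smul]; linarith
  have hn_lt_one : n • p < (1 : ℤ) • p := by rw [hn, one_smul]; linarith
  rw [zsmul_lt_zsmul_iff_left hp] at hn_pos hn_lt_one
  omega

theorem exists_fin_coloring_abs_lt {ε : 𝕜} (hε : 0 < ε) :
    ∃ (n : ℕ) (c : AddCircle p → Fin n), ∀ z w, c z = c w →
      ∃ q : 𝕜, |q| < ε ∧ (q : AddCircle p) = z - w := by
  let ρ : AddCircle p → 𝕜 := fun z => equivIco p 0 z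
  have hρ : ∀ z, 0 ≤ ρ z / ε ∧ ρ z / ε < p / ε := fun z => by
    have h : 0 ≤ ρ z ∧ ρ z < 0 + p := (equivIco p 0 z).2
    rw [zero_add] at h
    exact ⟨div_nonneg h.1 hε.le, div_lt_div_of_pos_right h.2 hε⟩
  have hfloor_lt : ∀ z, ⌊ρ z / ε⌋₊ < ⌈p / ε⌉₊ := fun z =>
    (Nat.floor_lt (hρ z).1).2 ((hρ z).2.trans_le (Nat.le_ceil _))
  refine ⟨⌈p / ε⌉₊, fun z => ⟨⌊ρ z / ε⌋₊, hfloor_lt z⟩,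
    fun z w hzw => ⟨ρ z - ρ w, ?_, by simp [ρ]⟩⟩
  have hfl : ⌊ρ z / ε⌋ = ⌊ρ w / ε⌋ := by
    rw [← Int.natCast_floor_eq_floor (hρ z).1, ← Int.natCast_floor_eq_floor (hρ w).1]
    exact congrArg _ (Fin.mk.inj_iff.1 hzw)
  have := Int.abs_sub_lt_one_of_floor_eq_floor hfl
  rwa [← sub_div, abs_div, abs_of_pos hε, div_lt_one hε] at this

theorem exists_fin_coloring_forall_sum_sub_ne {X ι : Type*} [Fintype ι]
    (g : ι → X → AddCircle p) {θ : AddCircle p} (hθ : θ ≠ 0) :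
    ∃ (r : ℕ) (χ : X → Fin r), ∀ x y : ι → X, (∀ i, χ (x i) = χ (y i)) →
      ∑ i, (g i (x i) - g i (y i)) ≠ θ := by
  classical
  obtain ⟨ε, hε, hθε⟩ := exists_pos_forall_abs_lt_coe_ne hθ
  have hk : (0 : 𝕜) < Fintype.card ι + 1 := by positivity
  obtain ⟨n, c, hc⟩ := exists_fin_coloring_abs_lt (p := p) (div_pos hε hk)
  refine ⟨_, fun x => Fintype.equivFin (ι → Fin n) fun i => c (g i x), fun x y hxy => ?_⟩
  choose q hq hqg using fun i => hc _ _ (congrFun ((Fintype.equivFin _).injective (hxy i)) i)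
  have hq_sum : |∑ i, q i| < ε := calc
    |∑ i, q i| ≤ ∑ i, |q i| := Finset.abs_sum_le_sum_abs _ _
    _ ≤ ∑ _i : ι, ε / (Fintype.card ι + 1) := Finset.sum_le_sum fun i _ => (hq i).le
    _ = ε * (Fintype.card ι / (Fintype.card ι + 1)) := by simp [mul_div_left_comm]
    _ < ε := mul_lt_of_lt_one_right hε ((div_lt_one hk).2 (lt_add_one _))
  have hcoe : ((∑ i, q i : 𝕜) : AddCircle p) = ∑ i, (g i (x i) - g i (y i)) := by
    rw [← Finset.sum_congr rfl fun i _ => hqg i]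
    exact map_sum (QuotientAddGroup.mk' _) q _
  exact hcoe ▸ hθε _ hq_sum

end AddCircle

theorem AddSubgroup.exists_character_eq_zero_of_mem_apply_ne_zero {M : Type*}
    [AddCommGroup M] {H : AddSubgroup M} {b : M} (hb : b ∉ H) :
    ∃ φ : M →+ AddCircle (1 : ℚ), (∀ h ∈ H, φ h = 0) ∧ φ b ≠ 0 := by
  have hπb : (b : M ⧸ H) ≠ 0 := by rwa [ne_eq, QuotientAddGroup.eq_zero_iff]
  obtain ⟨c, hc⟩ := CharacterModule.exists_character_apply_ne_zero_of_ne_zero hπb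
  refine ⟨(show M ⧸ H →+ AddCircle (1 : ℚ) from c).comp (QuotientAddGroup.mk' H),
    fun h hh => ?_, hc⟩
  change c (h : M ⧸ H) = 0
  rw [(QuotientAddGroup.eq_zero_iff h).2 hh, map_zero]

def IsPartitionRegular {R M ι : Type*} [Semiring R] [AddCommMonoid M] [Module R M] [Fintype ι]
    (a : ι → R) (b : M) : Prop :=
  ∀ r : ℕ, 1 ≤ r → ∀ χ : M → Fin r, ∃ m : ι → M,
    (∀ j j', χ (m j) = χ (m j')) ∧ ∑ i, a i • m i = b

theorem IsPartitionRegular.exists_sum_smul_eq {R M ι : Type*} [Semiring R] [AddCommGroup M]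
    [Module R M] [Fintype ι] {a : ι → R} {b : M} (h : IsPartitionRegular a b) :
    ∃ m : M, (∑ i, a i) • m = b := by
  by_contra hb
  obtain ⟨φ, hφ, hφb⟩ := AddSubgroup.exists_character_eq_zero_of_mem_apply_ne_zero
    (H := (DistribSMul.toAddMonoidHom M (∑ i, a i)).range) (b := b) (by simpa using hb)
  obtain ⟨r, χ, hχ⟩ :=
    AddCircle.exists_fin_coloring_forall_sum_sub_ne (fun i x => φ (a i • x)) hφb
  obtain ⟨m, hmono, hm⟩ := h r (χ 0).pos χ
  obtain ⟨y, hy⟩ : ∃ y, ∀ i, χ (m i) = χ y := by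
    rcases isEmpty_or_nonempty ι with _ | ⟨⟨j⟩⟩
    · exact ⟨0, isEmptyElim⟩
    · exact ⟨m j, fun i => hmono i j⟩
  refine hχ m (fun _ => y) hy ?_
  rw [Finset.sum_sub_distrib, ← map_sum, ← map_sum, hm, ← Finset.sum_smul,
    hφ ((∑ i, a i) • y) ⟨y, rfl⟩, sub_zero]

theorem nonhom_single_equation_general {R : Type*} [CommRing R] {l : ℕ}
    (M : Type*) [AddCommGroup M] [Module R M]
    (a : Fin l → R) (b : M) :
    ((∀ (r : ℕ), 1 ≤ r → ∀ χ : M → Fin r, ∃ m : Fin l → M,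
        (∀ j j', χ (m j) = χ (m j')) ∧ ∑ i, a i • m i = b) ↔
      (∃ m : M, ∑ i, a i • m = b)) ∧
    ((∃ m : M, ∑ i, a i • m = b) ↔ (∃ m : M, (∑ i, a i) • m = b)) := by
  have constant_iff : (∃ m : M, ∑ i, a i • m = b) ↔ ∃ m : M, (∑ i, a i) • m = b :=
    exists_congr fun m => by rw [Finset.sum_smul]
  refine ⟨⟨fun h => constant_iff.2 (IsPartitionRegular.exists_sum_smul_eq h), ?_⟩, constant_iff⟩
  rintro ⟨m, hm⟩ r - χ
  exact ⟨fun _ => m, fun _ _ => rfl, hm⟩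

theorem nonhom_single_equation {R : Type*} [CommRing R] {l : ℕ}
    (M : Type*) [AddCommGroup M] [Module R M]
    (a : Fin l → R) (b : M) (hb : b ≠ 0) :
    ((∀ (r : ℕ), 1 ≤ r → ∀ χ : M → Fin r, ∃ m : Fin l → M,
        (∀ j j', χ (m j) = χ (m j')) ∧ ∑ i, a i • m i = b) ↔
      (∃ m : M, ∑ i, a i • m = b)) ∧
    ((∃ m : M, ∑ i, a i • m = b) ↔ (∃ m : M, (∑ i, a i) • m = b)) :=
  nonhom_single_equation_general M a b
end

section
/- Let R be an integral domain, I an ideal of R, and M a torsion-free R-module. Then every R-module homomorphism φ : I → M satisfying φ(t) ∈ tM for all t ∈ I is principal, i.e., there exists m ∈ M with φ(t) = tm for all t ∈ I. -/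
/-- Cancelling a nonzero `t₀` from `t₀ • φ t = φ (t • t₀) = t₀ • t • m` is where torsion-freeness enters. -/
theorem LinearMap.eq_smul_of_apply_eq_smul {R M : Type*} [CommRing R] [AddCommGroup M]
    [Module R M] [NoZeroSMulDivisors R M] {I : Ideal R} (φ : I →ₗ[R] M) {t₀ : I}
    (ht₀ : (t₀ : R) ≠ 0) {m : M} (hm : φ t₀ = (t₀ : R) • m) (t : I) :
    φ t = (t : R) • m := by
  have hswap : (t₀ : R) • t = (t : R) • t₀ := Subtype.ext (mul_comm _ _)
  have hcancel : (t₀ : R) • (φ t - (t : R) • m) = 0 := by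
    rw [smul_sub, ← φ.map_smul, hswap, φ.map_smul, hm, smul_comm, sub_self]
  exact sub_eq_zero.mp ((eq_zero_or_eq_zero_of_smul_eq_zero hcancel).resolve_left ht₀)

theorem principal_of_torsionFree_general {R : Type*} [CommRing R]
    (I : Ideal R) (M : Type*) [AddCommGroup M] [Module R M]
    [NoZeroSMulDivisors R M]
    (φ : I →ₗ[R] M) (hφ : ∀ t : I, ∃ m : M, φ t = (t : R) • m) :
    ∃ m : M, ∀ t : I, φ t = (t : R) • m := by
  rcases eq_or_ne I ⊥ with rfl | hI
  · exact ⟨0, fun t => by rw [Subsingleton.elim t 0, map_zero, smul_zero]⟩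
  · obtain ⟨t₀, ht₀I, ht₀⟩ := Submodule.exists_mem_ne_zero_of_ne_bot hI
    obtain ⟨m, hm⟩ := hφ ⟨t₀, ht₀I⟩
    exact ⟨m, φ.eq_smul_of_apply_eq_smul ht₀ hm⟩

theorem principal_of_torsionFree {R : Type*} [CommRing R] [IsDomain R]
    (I : Ideal R) (M : Type*) [AddCommGroup M] [Module R M]
    [NoZeroSMulDivisors R M]
    (φ : I →ₗ[R] M) (hφ : ∀ t : I, ∃ m : M, φ t = (t : R) • m) :
    ∃ m : M, ∀ t : I, φ t = (t : R) • m :=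
  principal_of_torsionFree_general I M φ hφ
end

section
/- Let R be a Dedekind domain, I an ideal of R, and M any R-module. Then every R-module homomorphism φ : I → M with φ(t) ∈ tM for all t ∈ I is of the form φ(t) = tm for a fixed m ∈ M. -/
/-!
For an ideal `I`, every linear `f : I → R` satisfies `f s * t = s * f t`, both sides being
`f (s * t)`. If `I` is finitely generated projective, it has a finite dual basis
`t = ∑ i, fᵢ t • xᵢ`; writing `φ xᵢ = xᵢ • mᵢ`, this gives
`φ t = ∑ i, (fᵢ t * xᵢ) • mᵢ = t • ∑ i, fᵢ xᵢ • mᵢ`. Ideals of a Dedekind domain are finitely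
presented and torsion-free, hence flat, hence projective.
-/

theorem Module.Finite.exists_dual_basis_of_projective (R M : Type*) [Semiring R]
    [AddCommMonoid M] [Module R M] [Module.Finite R M] [Module.Projective R M] :
    ∃ (n : ℕ) (x : Fin n → M) (f : Fin n → M →ₗ[R] R), ∀ t, ∑ i, f i t • x i = t := by
  obtain ⟨n, π, σ, -, -, hπσ⟩ := Module.Finite.exists_comp_eq_id_of_projective R M
  refine ⟨n, fun i => π (Pi.single i 1), fun i => LinearMap.proj i ∘ₗ σ, fun t => ?_⟩
  calc ∑ i, σ t i • π (Pi.single i 1) = π (∑ i, Pi.single i (σ t i)) := by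
        simp only [map_sum, ← map_smul, ← Pi.single_smul', smul_eq_mul, mul_one]
    _ = t := by rw [Finset.univ_sum_single]; exact LinearMap.congr_fun hπσ t

namespace Ideal

variable {R : Type*} [CommRing R] {I : Ideal R}

theorem linearMap_apply_mul_comm (f : I →ₗ[R] R) (s t : I) : f s * t = s * f t :=
  calc f s * t = f ((t : R) • s) := by rw [map_smul, smul_eq_mul, mul_comm]
    _ = f ((s : R) • t) := by congr 1; ext; exact mul_comm _ _
    _ = s * f t := by rw [map_smul, smul_eq_mul]

theorem exists_eq_smul_of_finite_projective [Module.Finite R I] [Module.Projective R I]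
    {M : Type*} [AddCommMonoid M] [Module R M]
    (φ : I →ₗ[R] M) (hφ : ∀ t : I, ∃ m : M, φ t = (t : R) • m) :
    ∃ m : M, ∀ t : I, φ t = (t : R) • m := by
  obtain ⟨n, x, f, hxf⟩ := Module.Finite.exists_dual_basis_of_projective R I
  choose m hm using fun i => hφ (x i)
  refine ⟨∑ i, f i (x i) • m i, fun t => ?_⟩
  calc φ t = ∑ i, (f i t * x i) • m i := by
        conv_lhs => rw [← hxf t]
        simp only [map_sum, map_smul, hm, smul_smul]
    _ = ∑ i, ((t : R) * f i (x i)) • m i := by simp only [linearMap_apply_mul_comm]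
    _ = (t : R) • ∑ i, f i (x i) • m i := by simp only [Finset.smul_sum, smul_smul]

theorem projective_of_isDedekindDomain [IsDedekindDomain R] (I : Ideal R) :
    Module.Projective R I :=
  have := Module.finitePresentation_of_finite R I
  Module.Flat.projective_of_finitePresentation

end Ideal

theorem principal_of_dedekind {R : Type*} [CommRing R] [IsDedekindDomain R]
    (I : Ideal R) (M : Type*) [AddCommGroup M] [Module R M]
    (φ : I →ₗ[R] M) (hφ : ∀ t : I, ∃ m : M, φ t = (t : R) • m) :
    ∃ m : M, ∀ t : I, φ t = (t : R) • m :=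
  have := I.projective_of_isDedekindDomain
  Ideal.exists_eq_smul_of_finite_projective φ hφ
end

section
/- Let R be a reduced commutative ring with finitely many minimal prime ideals, and I an ideal of R. Then every R-module homomorphism φ : I → R with φ(t) ∈ tR for all t ∈ I is of the form φ(t) = tr for a fixed r ∈ R. -/
theorem principal_of_reduced {R : Type*} [CommRing R] [IsReduced R]
    (hmin : (minimalPrimes R).Finite) (I : Ideal R)
    (φ : I →ₗ[R] R) (hφ : ∀ t : I, ∃ r : R, φ t = (t : R) * r) :
    ∃ r : R, ∀ t : I, φ t = (t : R) * r := by
  classical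
  -- Key identity: t * φ s = s * φ t for s t : I
  have key : ∀ s t : I, (t : R) * φ s = (s : R) * φ t := by
    intro s t
    have h1 : (t : R) • s = (s : R) • t := Subtype.ext (mul_comm _ _)
    calc (t : R) * φ s = φ ((t : R) • s) := by rw [map_smul]; rfl
      _ = φ ((s : R) • t) := by rw [h1]
      _ = (s : R) * φ t := by rw [map_smul]; rfl
  -- prime avoidance: find t ∈ I avoiding every minimal prime not containing I
  have hPfin : {p ∈ minimalPrimes R | ¬ I ≤ p}.Finite :=
    hmin.subset (Set.sep_subset _ _)
  obtain ⟨t, ht⟩ : ∃ t : I, ∀ p ∈ minimalPrimes R, ¬ I ≤ p → (t : R) ∉ p := by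
    set F := hPfin.toFinset with hF
    have hprime : ∀ p ∈ F, p ≠ (⊥ : Ideal R) → p ≠ (⊥ : Ideal R) → p.IsPrime := by
      intro p hp _ _
      rw [hF, Set.Finite.mem_toFinset] at hp
      exact hp.1.1.1
    have hnot : ¬ ∃ p ∈ F, I ≤ p := by
      rintro ⟨p, hp, hle⟩
      rw [hF, Set.Finite.mem_toFinset] at hp
      exact hp.2 hle
    have hsub : ¬ ((I : Set R) ⊆ ⋃ p ∈ (↑F : Set (Ideal R)), (p : Set R)) := by
      intro h
      exact hnot ((Ideal.subset_union_prime (⊥ : Ideal R) (⊥ : Ideal R) hprime).mp h)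
    rw [Set.not_subset] at hsub
    obtain ⟨x, hxI, hx⟩ := hsub
    refine ⟨⟨x, hxI⟩, fun p hp hIp hxp => hx ?_⟩
    have hpF : p ∈ F := by
      rw [hF, Set.Finite.mem_toFinset]; exact ⟨hp, hIp⟩
    exact Set.mem_biUnion hpF hxp
  obtain ⟨r, hr⟩ := hφ t
  refine ⟨r, fun s => ?_⟩
  have hmem : ∀ p ∈ minimalPrimes R, φ s - (s : R) * r ∈ p := by
    intro p hp
    haveI hpp : p.IsPrime := hp.1.1
    by_cases hIp : I ≤ p
    · obtain ⟨c, hc⟩ := hφ s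
      have h1 : φ s ∈ p := hc ▸ p.mul_mem_right c (hIp s.2)
      exact p.sub_mem h1 (p.mul_mem_right r (hIp s.2))
    · have htp := ht p hp hIp
      have hz : (t : R) * (φ s - (s : R) * r) = 0 := by
        have hk := key s t
        rw [hr] at hk
        linear_combination hk
      have hm : (t : R) * (φ s - (s : R) * r) ∈ p := hz ▸ p.zero_mem
      rcases hpp.mem_or_mem hm with h | h
      · exact absurd h htp
      · exact h
  have hnil : φ s - (s : R) * r ∈ nilradical R := by
    have : φ s - (s : R) * r ∈ sInf (minimalPrimes R) :=
      Submodule.mem_sInf.mpr hmem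
    rwa [minimalPrimes, Ideal.sInf_minimalPrimes] at this
  rw [nilradical_eq_zero R] at hnil
  exact sub_eq_zero.mp (Ideal.mem_bot.mp hnil)
end

section
/- Let R be a commutative ring, M an R-module, A = (a_{ij}) a k×l matrix over R, and b ∈ M^k nonzero. Set a_i = Σ_j a_{ij} and I = (a₁,...,a_k)R. Assume H_R(I,M) = 0, i.e., every φ ∈ Hom_R(I,M) with φ(t) ∈ tM for all t ∈ I is of the form φ(t) = tm. Then the system Am = b is partition regular over M if and only if it has a constant solution m = (m,...,m) in M. -/
open BigOperators

/-!
If `Am = b` is partition regular, so is each combined equation `∑ⱼ dⱼ xⱼ = v` with `d = cA`,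
`v = ∑ᵢ cᵢ bᵢ`, and then `v ∈ (∑ⱼ dⱼ) M`. Otherwise some character `g : M → ℝ/ℤ` vanishes on
`(∑ⱼ dⱼ) M` but not at `v`; colour `x` by small arcs containing the points `g (dⱼ x)`. For a
monochromatic solution `m` and any index `j₀`, `g v = ∑ⱼ (g (dⱼ mⱼ) - g (dⱼ m_{j₀}))` is then a
sum of `l` tiny terms, which is impossible. Hence `∑ cᵢ aᵢ ↦ ∑ cᵢ bᵢ` is a well-defined map
`φ : I → M` with `φ t ∈ t M`; `H_R(I, M) = 0` makes it `t ↦ t m`, and `m` is a constant solution.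
-/

open Finset

def PartitionRegular {X J : Type*} (S : Set (J → X)) : Prop :=
  ∀ r : ℕ, 1 ≤ r → ∀ χ : X → Fin r, ∃ m : J → X, (∀ j j', χ (m j) = χ (m j')) ∧ m ∈ S

namespace PartitionRegular

variable {X J : Type*} {S T : Set (J → X)}

theorem mono (h : PartitionRegular S) (hST : S ⊆ T) : PartitionRegular T := fun r hr χ =>
  let ⟨m, hχ, hm⟩ := h r hr χ
  ⟨m, hχ, hST hm⟩

theorem exists_of_finite [Nonempty X] (h : PartitionRegular S) {ι : Type*} [Finite ι]
    (χ : X → ι) : ∃ m : J → X, (∀ j j', χ (m j) = χ (m j')) ∧ m ∈ S := by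
  obtain ⟨n, ⟨e⟩⟩ := Finite.exists_equiv_fin ι
  have hn : 1 ≤ n := Fin.pos_iff_nonempty.2 ⟨e (χ (Classical.arbitrary X))⟩
  obtain ⟨m, hχ, hm⟩ := h n hn (e ∘ χ)
  exact ⟨m, fun j j' => e.injective (hχ j j'), hm⟩

end PartitionRegular

theorem exists_finite_coloring_dist_lt {X : Type*} [PseudoMetricSpace X] [CompactSpace X]
    {ε : ℝ} (hε : 0 < ε) :
    ∃ (t : Set X) (_ : Finite t) (c : X → t), ∀ x y, c x = c y → dist x y < ε := by
  obtain ⟨t, -, ht, hcover⟩ :=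
    finite_cover_balls_of_compact (isCompact_univ (X := X)) (half_pos hε)
  have hmem : ∀ x, ∃ y ∈ t, dist x y < ε / 2 := fun x => by
    simpa using hcover (Set.mem_univ x)
  choose c hct hc using hmem
  refine ⟨t, ht.to_subtype, fun x => ⟨c x, hct x⟩, fun x y hxy => ?_⟩
  have hcxy : c x = c y := congrArg Subtype.val hxy
  calc dist x y ≤ dist x (c x) + dist y (c y) := by
        rw [hcxy]; exact dist_triangle_right x y (c y)
    _ < ε / 2 + ε / 2 := add_lt_add (hc x) (hc y)
    _ = ε := add_halves ε

noncomputable def AddCircle.ratToReal : AddCircle (1 : ℚ) →+ AddCircle (1 : ℝ) :=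
  QuotientAddGroup.map _ _ (Rat.castHom ℝ).toAddMonoidHom <| by
    rw [AddSubgroup.zmultiples_le]
    exact ⟨1, by simp⟩

theorem AddCircle.ratToReal_injective : Function.Injective AddCircle.ratToReal := by
  refine (injective_iff_map_eq_zero _).2 fun x hx => ?_
  induction x using QuotientAddGroup.induction_on with
  | H q =>
    obtain ⟨n, hn⟩ := (AddCircle.coe_eq_zero_iff (1 : ℝ)).1 hx
    refine (AddCircle.coe_eq_zero_iff (1 : ℚ)).2 ⟨n, ?_⟩
    simp only [zsmul_one, RingHom.toAddMonoidHom_eq_coe, AddMonoidHom.coe_coe,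
      Rat.coe_castHom] at hn ⊢
    exact_mod_cast hn

theorem AddSubgroup.exists_addMonoidHom_addCircle {M : Type*} [AddCommGroup M]
    (N : AddSubgroup M) {v : M} (hv : v ∉ N) :
    ∃ g : M →+ AddCircle (1 : ℝ), (∀ x ∈ N, g x = 0) ∧ g v ≠ 0 := by
  obtain ⟨c, hc⟩ : ∃ c : M ⧸ N →+ AddCircle (1 : ℚ), c (QuotientAddGroup.mk' N v) ≠ 0 :=
    CharacterModule.exists_character_apply_ne_zero_of_ne_zero (by simpa using hv)
  refine ⟨AddCircle.ratToReal.comp (c.comp (QuotientAddGroup.mk' N)), fun x hx => ?_, ?_⟩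
  · simp [(QuotientAddGroup.eq_zero_iff x).2 hx]
  · exact fun h => hc (AddCircle.ratToReal_injective (h.trans (map_zero _).symm))

section SingleEquation

variable {R M J : Type*} [Semiring R] [AddCommGroup M] [Module R M] [Fintype J]
  {d : J → R} {v : M}

theorem PartitionRegular.map_eq_zero {G : Type*} [NormedAddCommGroup G] [CompactSpace G]
    (h : PartitionRegular {m : J → M | ∑ j, d j • m j = v}) (g : M →+ G)
    (hg : ∀ x, g ((∑ j, d j) • x) = 0) : g v = 0 := by
  rcases isEmpty_or_nonempty J with hJ | ⟨⟨j₀⟩⟩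
  · obtain ⟨m, -, hm⟩ := h 1 le_rfl fun _ => 0
    simp [← show ∑ j, d j • m j = v from hm]
  by_contra hv
  have hcard : (0 : ℝ) < Fintype.card J := mod_cast Fintype.card_pos_iff.2 ⟨j₀⟩
  have hε : 0 < ‖g v‖ / Fintype.card J := div_pos (norm_pos_iff.2 hv) hcard
  obtain ⟨t, _, c, hc⟩ := exists_finite_coloring_dist_lt (X := G) hε
  obtain ⟨m, hχ, hm⟩ := h.exists_of_finite fun x j => c (g (d j • x))
  have hclose : ∀ j, ‖g (d j • m j) - g (d j • m j₀)‖ < ‖g v‖ / Fintype.card J := fun j => by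
    rw [← dist_eq_norm]
    exact hc _ _ (congrFun (hχ j j₀) j)
  have hsum : g v = ∑ j, (g (d j • m j) - g (d j • m j₀)) := by
    rw [sum_sub_distrib, ← map_sum, ← map_sum, ← sum_smul, hg, sub_zero,
      show ∑ j, d j • m j = v from hm]
  have hlt : ‖g v‖ < ‖g v‖ := calc
    ‖g v‖ ≤ ∑ j, ‖g (d j • m j) - g (d j • m j₀)‖ := hsum ▸ norm_sum_le _ _
    _ < ∑ _j : J, ‖g v‖ / Fintype.card J :=
      sum_lt_sum_of_nonempty ⟨j₀, mem_univ _⟩ fun j _ => hclose j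
    _ = ‖g v‖ := by
      rw [sum_const, card_univ, nsmul_eq_mul, mul_div_cancel₀ _ hcard.ne']
  exact lt_irrefl _ hlt

theorem PartitionRegular.exists_sum_smul_eq
    (h : PartitionRegular {m : J → M | ∑ j, d j • m j = v}) : ∃ x : M, (∑ j, d j) • x = v := by
  by_contra hv
  obtain ⟨g, hgN, hgv⟩ := AddSubgroup.exists_addMonoidHom_addCircle
    (DistribSMul.toAddMonoidHom M (∑ j, d j)).range (v := v) (by simpa using hv)
  exact hgv (h.map_eq_zero g fun x => hgN _ ⟨x, rfl⟩)

end SingleEquation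

theorem PartitionRegular.exists_smul_eq_sum_smul {R M ι J : Type*} [Semiring R] [AddCommGroup M]
    [Module R M] [Fintype ι] [Fintype J] {A : Matrix ι J R} {b : ι → M}
    (h : PartitionRegular {m : J → M | ∀ i, ∑ j, A i j • m j = b i}) (c : ι → R) :
    ∃ x : M, (∑ i, c i • ∑ j, A i j) • x = ∑ i, c i • b i := by
  have hcomb : PartitionRegular {m : J → M | ∑ j, (∑ i, c i * A i j) • m j = ∑ i, c i • b i} :=
    h.mono fun m hm => by
      simp only [Set.mem_ofPred_eq, sum_smul, mul_smul] at hm ⊢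
      rw [sum_comm]
      simp only [← smul_sum, hm]
  obtain ⟨x, hx⟩ := hcomb.exists_sum_smul_eq
  refine ⟨x, by rw [← hx, sum_comm]; simp only [smul_eq_mul, mul_sum]⟩

theorem LinearMap.exists_comp_rangeRestrict_eq_of_ker_le {R N P M : Type*} [Ring R] [AddCommGroup N]
    [AddCommGroup P] [AddCommGroup M] [Module R N] [Module R P] [Module R M]
    (f : N →ₗ[R] P) (g : N →ₗ[R] M) (h : LinearMap.ker f ≤ LinearMap.ker g) :
    ∃ φ : LinearMap.range f →ₗ[R] M, φ ∘ₗ f.rangeRestrict = g :=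
  ⟨(LinearMap.ker f).liftQ g h ∘ₗ f.quotKerEquivRange.symm.toLinearMap, by
    ext x
    exact congrArg _ (f.quotKerEquivRange_symm_apply_image x _)⟩

section ConstantSolution

variable {R M ι : Type*} [Ring R] [AddCommGroup M] [Module R M] [Fintype ι]
  {a : ι → R} {b : ι → M}

theorem exists_linearMap_span_apply_eq
    (h : ∀ c : ι → R, ∑ i, c i • a i = 0 → ∑ i, c i • b i = 0) :
    ∃ φ : Submodule.span R (Set.range a) →ₗ[R] M,
      ∀ (c : ι → R) (t : Submodule.span R (Set.range a)),
        (t : R) = ∑ i, c i • a i → φ t = ∑ i, c i • b i := by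
  obtain ⟨ψ, hψ⟩ := (Fintype.linearCombination R a).exists_comp_rangeRestrict_eq_of_ker_le
    (Fintype.linearCombination R b) h
  refine ⟨ψ ∘ₗ (LinearEquiv.ofEq _ _ (Fintype.range_linearCombination R a).symm).toLinearMap,
    fun c t ht => ?_⟩
  rw [← Fintype.linearCombination_apply, ← hψ]
  exact congrArg ψ (Subtype.ext ht)

theorem exists_forall_smul_eq_of_forall_exists_smul_eq
    (hH : ∀ φ : Submodule.span R (Set.range a) →ₗ[R] M,
      (∀ t : Submodule.span R (Set.range a), ∃ m : M, φ t = (t : R) • m) →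
      ∃ m : M, ∀ t : Submodule.span R (Set.range a), φ t = (t : R) • m)
    (h : ∀ c : ι → R, ∃ x : M, (∑ i, c i • a i) • x = ∑ i, c i • b i) :
    ∃ m : M, ∀ i, a i • m = b i := by
  obtain ⟨φ, hφ⟩ := exists_linearMap_span_apply_eq fun c hc => by
    obtain ⟨x, hx⟩ := h c
    rw [← hx, hc, zero_smul]
  obtain ⟨m, hm⟩ := hH φ fun t => by
    obtain ⟨c, hc⟩ := (Submodule.mem_span_range_iff_exists_fun R).1 t.2
    obtain ⟨x, hx⟩ := h c
    exact ⟨x, by rw [hφ c t hc.symm, ← hx, hc]⟩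
  classical
  refine ⟨m, fun i => ?_⟩
  have hi := hm ⟨a i, Submodule.subset_span ⟨i, rfl⟩⟩
  rw [hφ (Pi.single i 1) _ (by simp [Pi.single_apply])] at hi
  simpa [Pi.single_apply] using hi.symm

end ConstantSolution

theorem nonhom_system_pr_iff_constant_general {R : Type*} [CommRing R] {k l : ℕ}
    (M : Type*) [AddCommGroup M] [Module R M]
    (A : Matrix (Fin k) (Fin l) R) (b : Fin k → M)
    (hH : ∀ φ : (Ideal.span (Set.range fun i : Fin k => ∑ j, A i j)) →ₗ[R] M,
      (∀ t : (Ideal.span (Set.range fun i : Fin k => ∑ j, A i j)),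
        ∃ m : M, φ t = (t : R) • m) →
      ∃ m : M, ∀ t : (Ideal.span (Set.range fun i : Fin k => ∑ j, A i j)),
        φ t = (t : R) • m) :
    (∀ (r : ℕ), 1 ≤ r → ∀ χ : M → Fin r, ∃ m : Fin l → M,
        (∀ j j', χ (m j) = χ (m j')) ∧ ∀ i, ∑ j, A i j • m j = b i) ↔
      (∃ m : M, ∀ i, ∑ j, A i j • m = b i) := by
  refine ⟨fun hPR => ?_, fun ⟨m, hm⟩ _ _ _ => ⟨fun _ => m, fun _ _ => rfl, hm⟩⟩
  obtain ⟨m, hm⟩ := exists_forall_smul_eq_of_forall_exists_smul_eq hH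
    (PartitionRegular.exists_smul_eq_sum_smul hPR)
  exact ⟨m, fun i => by rw [← sum_smul, hm]⟩

theorem nonhom_system_pr_iff_constant {R : Type*} [CommRing R] {k l : ℕ}
    (M : Type*) [AddCommGroup M] [Module R M]
    (A : Matrix (Fin k) (Fin l) R) (b : Fin k → M) (hb : b ≠ 0)
    (hH : ∀ φ : (Ideal.span (Set.range fun i : Fin k => ∑ j, A i j)) →ₗ[R] M,
      (∀ t : (Ideal.span (Set.range fun i : Fin k => ∑ j, A i j)),
        ∃ m : M, φ t = (t : R) • m) →
      ∃ m : M, ∀ t : (Ideal.span (Set.range fun i : Fin k => ∑ j, A i j)),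
        φ t = (t : R) • m) :
    (∀ (r : ℕ), 1 ≤ r → ∀ χ : M → Fin r, ∃ m : Fin l → M,
        (∀ j j', χ (m j) = χ (m j')) ∧ ∀ i, ∑ j, A i j • m j = b i) ↔
      (∃ m : M, ∀ i, ∑ j, A i j • m = b i) :=
  nonhom_system_pr_iff_constant_general M A b hH
end
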